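/- arXiv:2107.03801 — 8 statements merged into one kernel-verified Lean document; each statement's English description precedes it below -/
import Mathlib

section
/- In the house allocation instance with three applicants a_1, a_2, a_3 and three projects p_1, p_2, p_3, where each project has lower and upper quota 3, and the preference lists are a_1 : p_1 ≻ p_2 ≻ p_3, a_2 : p_2 ≻ p_3 ≻ p_1, a_3 : p_3 ≻ p_1 ≻ p_2 (cyclic shifts of each other), no popular matching exists. -/
open scoped Classical

/-- A house allocation instance with lower and upper quotas: applicants `A`,
projects `P`, acceptability `acc`, ranks `rk` (lower rank = more preferred),
and lower/upper quotas `lq`, `uq` for each project. -/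
structure HA (A P : Type) where
  acc : A → P → Prop
  rk : A → P → ℕ
  lq : P → ℕ
  uq : P → ℕ

namespace HA

variable {A P : Type} [Fintype A] [Fintype P]

/-- `I.Prefers a o₁ o₂` : applicant `a` strictly prefers assignment `o₁` to `o₂`
(`none` = being unmatched; every acceptable project is preferred to being unmatched). -/
def Prefers (I : HA A P) (a : A) : Option P → Option P → Prop
  | some p, some q => I.acc a p ∧ I.acc a q ∧ I.rk a p < I.rk a q
  | some p, none => I.acc a p
  | none, _ => False

/-- The set of applicants assigned to project `p` by `M`. -/
noncomputable def assigned (M : A → Option P) (p : P) : Finset A :=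
  Finset.univ.filter fun a => M a = some p

/-- `M` is a feasible matching: applicants are only assigned acceptable projects, and
every project is either closed (no assignees) or open with a number of assignees
between its lower and upper quota. -/
def IsMatching (I : HA A P) (M : A → Option P) : Prop :=
  (∀ a p, M a = some p → I.acc a p) ∧
  ∀ p : P, (assigned M p).card = 0 ∨
    (I.lq p ≤ (assigned M p).card ∧ (assigned M p).card ≤ I.uq p)

/-- `M'` is more popular than `M`. -/
def MorePopular (I : HA A P) (M' M : A → Option P) : Prop :=
  (Finset.univ.filter fun a => I.Prefers a (M a) (M' a)).card <
  (Finset.univ.filter fun a => I.Prefers a (M' a) (M a)).card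

/-- A popular matching. -/
def Popular (I : HA A P) (M : A → Option P) : Prop :=
  I.IsMatching M ∧ ∀ M', I.IsMatching M' → ¬ I.MorePopular M' M

/-- `M'` dominates `M`: no applicant is worse off and some applicant is better off. -/
def Dominates (I : HA A P) (M' M : A → Option P) : Prop :=
  (∀ a, ¬ I.Prefers a (M a) (M' a)) ∧ ∃ a, I.Prefers a (M' a) (M a)

/-- A Pareto optimal matching. -/
def ParetoOptimal (I : HA A P) (M : A → Option P) : Prop :=
  I.IsMatching M ∧ ∀ M', I.IsMatching M' → ¬ I.Dominates M' M

/-- A perfect matching: every applicant is matched. -/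
def Perfect (M : A → Option P) : Prop := ∀ a, M a ≠ none

/-- The weight of matching `M` w.r.t. integer edge weights `w`. -/
noncomputable def weight (w : A → P → ℤ) (M : A → Option P) : ℤ :=
  ∑ a, (M a).elim 0 (w a)

/-- Project `p` is open under `M`. -/
def OpenProj (M : A → Option P) (p : P) : Prop := ∃ a, M a = some p

/-- The number of projects opened by `M`. -/
noncomputable def opensCount (M : A → Option P) : ℕ :=
  (Finset.univ.filter fun p => OpenProj M p).card

/-- The number of projects closed by `M`. -/
noncomputable def closesCount (M : A → Option P) : ℕ :=
  (Finset.univ.filter fun p => ¬ OpenProj M p).card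

/-- The preferences of every applicant form a strict order on her acceptable projects. -/
def Strict (I : HA A P) : Prop :=
  ∀ a p q, I.acc a p → I.acc a q → I.rk a p = I.rk a q → p = q

end HA

/-- The instance of Observation 2: three applicants, three projects, each project with
lower and upper quota 3, and cyclically shifted preference lists:
`a₀ : p₀ ≻ p₁ ≻ p₂`, `a₁ : p₁ ≻ p₂ ≻ p₀`, `a₂ : p₂ ≻ p₀ ≻ p₁`. -/
def I1 : HA (Fin 3) (Fin 3) where
  acc _ _ := True
  rk a p := (p.val + 3 - a.val) % 3
  lq _ := 3
  uq _ := 3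

/-!
Since every lower quota equals the number of applicants, a matching either leaves everybody
unmatched or sends all three applicants to one project. The empty matching loses to any such
constant matching, and sending everybody to `p` loses to sending everybody to `p + 2`, which
the two applicants other than `p` prefer. So every matching is beaten by another one.
-/

namespace HA

variable {A P : Type} [Fintype A]

theorem isMatching_const {I : HA A P} {p : P} (hacc : ∀ a, I.acc a p)
    (hlq : I.lq p ≤ Fintype.card A) (huq : Fintype.card A ≤ I.uq p) :
    I.IsMatching fun _ => some p := by
  refine ⟨by rintro a q ⟨⟩; exact hacc a, fun q => ?_⟩
  by_cases hq : q = p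
  · subst hq
    have hall : assigned (fun _ : A => some q) q = Finset.univ := by
      ext; simp [assigned]
    exact Or.inr (by simpa [hall] using ⟨hlq, huq⟩)
  · exact Or.inl (by simp [assigned, Ne.symm hq])

theorem IsMatching.eq_some_of_eq_some {I : HA A P} {M : A → Option P} (hM : I.IsMatching M)
    (hlq : ∀ p, Fintype.card A ≤ I.lq p) {a : A} {p : P} (ha : M a = some p) (b : A) :
    M b = some p := by
  have hmem : a ∈ assigned M p := by simp [assigned, ha]
  have hall : assigned M p = Finset.univ := by
    apply Finset.eq_univ_of_card
    rcases hM.2 p with h0 | ⟨hl, -⟩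
    · simp [Finset.card_eq_zero.mp h0] at hmem
    · exact le_antisymm (Finset.card_le_univ _) ((hlq p).trans hl)
  have hb : b ∈ assigned M p := hall ▸ Finset.mem_univ b
  simpa [assigned] using hb

theorem IsMatching.eq_none_or_eq_const {I : HA A P} {M : A → Option P} (hM : I.IsMatching M)
    (hlq : ∀ p, Fintype.card A ≤ I.lq p) :
    M = (fun _ => none) ∨ ∃ p, M = fun _ => some p := by
  by_cases h : ∀ a, M a = none
  · exact Or.inl (funext h)
  obtain ⟨a, ha⟩ := not_forall.mp h
  obtain ⟨p, ha⟩ := Option.ne_none_iff_exists'.mp ha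
  exact Or.inr ⟨p, funext (hM.eq_some_of_eq_some hlq ha)⟩

theorem morePopular_const_none [Nonempty A] {I : HA A P} {p : P} (hacc : ∀ a, I.acc a p) :
    I.MorePopular (fun _ => some p) (fun _ => none) := by
  have hnobody : Finset.univ.filter (fun a => I.Prefers a none (some p)) = ∅ :=
    Finset.filter_false_of_mem fun _ _ h => h
  have heverybody : Finset.univ.filter (fun a => I.Prefers a (some p) none) = Finset.univ :=
    Finset.filter_true_of_mem fun a _ => hacc a
  rw [MorePopular, hnobody, heverybody]
  exact Finset.univ_nonempty.card_pos

end HA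

theorem I1_prefers_self_iff (a p : Fin 3) :
    I1.Prefers a (some p) (some (p + 2)) ↔ a = p := by
  fin_cases a <;> fin_cases p <;> simp [HA.Prefers, I1]

theorem I1_prefers_add_two_iff (a p : Fin 3) :
    I1.Prefers a (some (p + 2)) (some p) ↔ a ≠ p := by
  fin_cases a <;> fin_cases p <;> simp [HA.Prefers, I1]

theorem I1_morePopular_const_add_two (p : Fin 3) :
    I1.MorePopular (fun _ => some (p + 2)) (fun _ => some p) := by
  have hworse : Finset.univ.filter (fun a => I1.Prefers a (some p) (some (p + 2))) = {p} := by
    ext a; simp [I1_prefers_self_iff]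
  have hbetter : Finset.univ.filter (fun a => I1.Prefers a (some (p + 2)) (some p)) =
      Finset.univ.erase p := by
    ext a; simp [I1_prefers_add_two_iff]
  rw [HA.MorePopular, hworse, hbetter, Finset.card_erase_of_mem (Finset.mem_univ p)]
  simp

/-- In the house allocation instance with three applicants and three projects, each with
lower and upper quota 3, where the preference lists are cyclic shifts of one another,
no popular matching exists. -/
theorem stmt_1 : ¬ ∃ M : Fin 3 → Option (Fin 3), I1.Popular M := by
  rintro ⟨M, hM, hpop⟩
  have hconst : ∀ p, I1.IsMatching fun _ => some p := fun p =>
    HA.isMatching_const (fun _ => trivial) (by simp [I1]) (by simp [I1])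
  rcases hM.eq_none_or_eq_const (fun _ => by simp [I1]) with rfl | ⟨p, rfl⟩
  · exact hpop _ (hconst 0) (HA.morePopular_const_none fun _ => trivial)
  · exact hpop _ (hconst (p + 2)) (I1_morePopular_const_add_two p)
end

section
/- Let a house allocation instance have n applicants and m projects, and define edge weights as follows: for each applicant a whose preference list is p_1 ≻_a p_2 ≻_a ⋯ ≻_a p_k, set w({a, p_i}) = (k − i) + mn for i = 1, …, k. Then every maximum-weight matching of this weighted instance is a matching of maximum cardinality (it matches the maximum possible number of applicants) and is Pareto optimal. -/
open scoped Classical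

section Helpers

variable {A P : Type} [Fintype A] [Fintype P]

/-- Lower and upper bounds on the weight of an acceptable edge. -/
lemma w_bounds (I : HA A P) (w : A → P → ℤ)
    (hw : ∀ a p, I.acc a p →
      w a p = ((Finset.univ.filter fun q => I.acc a q ∧ I.rk a p < I.rk a q).card : ℤ)
        + (Fintype.card P : ℤ) * (Fintype.card A : ℤ))
    (a : A) (p : P) (hacc : I.acc a p) :
    (Fintype.card P : ℤ) * (Fintype.card A : ℤ) ≤ w a p ∧
    w a p ≤ ((Fintype.card P : ℤ) - 1) + (Fintype.card P : ℤ) * (Fintype.card A : ℤ) := by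
  rw [hw a p hacc]
  have h0 : (0 : ℤ) ≤ ((Finset.univ.filter fun q => I.acc a q ∧ I.rk a p < I.rk a q).card : ℤ) :=
    Int.natCast_nonneg _
  refine ⟨by linarith, ?_⟩
  have hp : p ∉ Finset.univ.filter fun q => I.acc a q ∧ I.rk a p < I.rk a q := by simp
  have h1 : (Finset.univ.filter fun q => I.acc a q ∧ I.rk a p < I.rk a q).card + 1
      ≤ Fintype.card P := by
    rw [← Finset.card_insert_of_notMem hp]
    exact Finset.card_le_univ _
  have h1' : ((Finset.univ.filter fun q => I.acc a q ∧ I.rk a p < I.rk a q).card : ℤ) + 1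
      ≤ (Fintype.card P : ℤ) := by exact_mod_cast h1
  linarith

/-- A strictly preferred project has strictly larger weight. -/
lemma w_strict (I : HA A P) (w : A → P → ℤ)
    (hw : ∀ a p, I.acc a p →
      w a p = ((Finset.univ.filter fun q => I.acc a q ∧ I.rk a p < I.rk a q).card : ℤ)
        + (Fintype.card P : ℤ) * (Fintype.card A : ℤ))
    (a : A) (p q : P) (hp : I.acc a p) (hq : I.acc a q) (hlt : I.rk a q < I.rk a p) :
    w a p < w a q := by
  rw [hw a p hp, hw a q hq]
  have hmem : p ∉ Finset.univ.filter fun r => I.acc a r ∧ I.rk a p < I.rk a r := by simp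
  have hsub : insert p (Finset.univ.filter fun r => I.acc a r ∧ I.rk a p < I.rk a r)
      ⊆ Finset.univ.filter fun r => I.acc a r ∧ I.rk a q < I.rk a r := by
    intro r hr
    rcases Finset.mem_insert.1 hr with h | h
    · subst h; simp [hp, hlt]
    · simp only [Finset.mem_filter, Finset.mem_univ, true_and] at h ⊢
      exact ⟨h.1, lt_trans hlt h.2⟩
  have hc : (Finset.univ.filter fun r => I.acc a r ∧ I.rk a p < I.rk a r).card + 1
      ≤ (Finset.univ.filter fun r => I.acc a r ∧ I.rk a q < I.rk a r).card := by
    rw [← Finset.card_insert_of_notMem hmem]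
    exact Finset.card_le_card hsub
  have hc' : ((Finset.univ.filter fun r => I.acc a r ∧ I.rk a p < I.rk a r).card : ℤ) + 1
      ≤ ((Finset.univ.filter fun r => I.acc a r ∧ I.rk a q < I.rk a r).card : ℤ) := by
    exact_mod_cast hc
  linarith

omit [Fintype P] in
lemma weight_eq_sum_filter (w : A → P → ℤ) (M : A → Option P) :
    HA.weight w M = ∑ a ∈ Finset.univ.filter (fun a => M a ≠ none), (M a).elim 0 (w a) := by
  classical
  rw [HA.weight, ← Finset.sum_filter_add_sum_filter_not Finset.univ (fun a => M a ≠ none)]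
  have h0 : ∑ a ∈ Finset.univ.filter (fun a => ¬ M a ≠ none), (M a).elim 0 (w a) = 0 := by
    apply Finset.sum_eq_zero
    intro a ha
    simp only [Finset.mem_filter, not_not] at ha
    rw [ha.2]; rfl
  rw [h0, add_zero]

end Helpers

/-- Lemma 1: give the edge between `a` and her `i`-th ranked project (out of `k`
acceptable ones) the weight `(k - i) + m·n`; here `(k - i)` equals the number of
acceptable projects that `a` ranks strictly below that project.  Then every
maximum-weight matching matches the maximum possible number of applicants and is
Pareto optimal. -/
theorem stmt_2 {A P : Type} [Fintype A] [Fintype P] (I : HA A P) (hstrict : I.Strict)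
    (w : A → P → ℤ)
    (hw : ∀ a p, I.acc a p →
      w a p = ((Finset.univ.filter fun q => I.acc a q ∧ I.rk a p < I.rk a q).card : ℤ)
        + (Fintype.card P : ℤ) * (Fintype.card A : ℤ))
    (M : A → Option P) (hM : I.IsMatching M)
    (hmax : ∀ M', I.IsMatching M' → HA.weight w M' ≤ HA.weight w M) :
    (∀ M', I.IsMatching M' →
      (Finset.univ.filter fun a => M' a ≠ none).card ≤
        (Finset.univ.filter fun a => M a ≠ none).card) ∧
    I.ParetoOptimal M := by
  set m : ℤ := (Fintype.card P : ℤ) with hm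
  set n : ℤ := (Fintype.card A : ℤ) with hn
  constructor
  · -- maximum cardinality
    intro M' hM'
    by_contra hlt
    push_neg at hlt
    set S := Finset.univ.filter (fun a => M a ≠ none) with hS
    set S' := Finset.univ.filter (fun a => M' a ≠ none) with hS'
    -- S' nonempty
    have hScard : S.card < S'.card := hlt
    have hS'pos : 0 < S'.card := lt_of_le_of_lt (Nat.zero_le _) hScard
    obtain ⟨a0, ha0⟩ := Finset.card_pos.1 hS'pos
    have ha0' : M' a0 ≠ none := (Finset.mem_filter.1 ha0).2
    obtain ⟨q0, hq0⟩ := Option.ne_none_iff_exists'.1 ha0'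
    have hmpos : (1 : ℤ) ≤ m := by
      rw [hm]; exact_mod_cast Fintype.card_pos_iff.2 ⟨q0⟩
    have hnpos : (1 : ℤ) ≤ n := by
      rw [hn]; exact_mod_cast Fintype.card_pos_iff.2 ⟨a0⟩
    -- lower bound on weight M'
    have hlb : (S'.card : ℤ) * (m * n) ≤ HA.weight w M' := by
      rw [weight_eq_sum_filter, ← hS']
      have := Finset.card_nsmul_le_sum S' (fun a => (M' a).elim 0 (w a)) (m * n) ?_
      · simpa [nsmul_eq_mul] using this
      · intro a ha
        have hne : M' a ≠ none := (Finset.mem_filter.1 ha).2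
        obtain ⟨q, hq⟩ := Option.ne_none_iff_exists'.1 hne
        have hacc := hM'.1 a q hq
        show m * n ≤ (M' a).elim 0 (w a)
        rw [hq]
        exact (w_bounds I w hw a q hacc).1
    -- upper bound on weight M
    have hub : HA.weight w M ≤ (S.card : ℤ) * ((m - 1) + m * n) := by
      rw [weight_eq_sum_filter, ← hS]
      have := Finset.sum_le_card_nsmul S (fun a => (M a).elim 0 (w a)) ((m - 1) + m * n) ?_
      · simpa [nsmul_eq_mul, mul_add] using this
      · intro a ha
        have hne : M a ≠ none := (Finset.mem_filter.1 ha).2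
        obtain ⟨q, hq⟩ := Option.ne_none_iff_exists'.1 hne
        have hacc := hM.1 a q hq
        show (M a).elim 0 (w a) ≤ (m - 1) + m * n
        rw [hq]
        exact (w_bounds I w hw a q hacc).2
    have hwle := hmax M' hM'
    have hcard1 : (S.card : ℤ) + 1 ≤ (S'.card : ℤ) := by exact_mod_cast hScard
    have hSn : (S.card : ℤ) ≤ n := by
      rw [hn]; exact_mod_cast Finset.card_le_univ S
    have hmn0 : 0 ≤ m * n := by positivity
    nlinarith [mul_le_mul_of_nonneg_right hcard1 hmn0,
      mul_le_mul_of_nonneg_right hSn (by linarith : (0:ℤ) ≤ m - 1)]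
  · -- Pareto optimality
    refine ⟨hM, ?_⟩
    rintro M' hM' ⟨hd1, a0, hd2⟩
    have key : HA.weight w M < HA.weight w M' := by
      apply Finset.sum_lt_sum
      · intro a _
        have hda := hd1 a
        cases hMa : M a with
        | none =>
          cases hM'a : M' a with
          | none => simp
          | some q =>
            have hacc := hM'.1 a q hM'a
            have := (w_bounds I w hw a q hacc).1
            have hmn0 : 0 ≤ m * n := by positivity
            simpa using le_trans hmn0 this
        | some p =>
          have haccp := hM.1 a p hMa
          cases hM'a : M' a with
          | none =>
            exfalso
            rw [hMa, hM'a] at hda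
            exact hda haccp
          | some q =>
            have haccq := hM'.1 a q hM'a
            rw [hMa, hM'a] at hda
            have hnot : ¬ I.rk a p < I.rk a q := fun h => hda ⟨haccp, haccq, h⟩
            have hle : I.rk a q ≤ I.rk a p := not_lt.1 hnot
            rcases lt_or_eq_of_le hle with hlt | heq
            · have := w_strict I w hw a p q haccp haccq hlt
              simpa using le_of_lt this
            · have : q = p := hstrict a q p haccq haccp heq
              subst this; simp
      · refine ⟨a0, Finset.mem_univ a0, ?_⟩
        cases hM'a : M' a0 with
        | none => rw [hM'a] at hd2; exact absurd hd2 (by simp [HA.Prefers])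
        | some q =>
          have haccq := hM'.1 a0 q hM'a
          cases hMa : M a0 with
          | none =>
            have hmpos : (1 : ℤ) ≤ m := by
              rw [hm]; exact_mod_cast Fintype.card_pos_iff.2 ⟨q⟩
            have hnpos : (1 : ℤ) ≤ n := by
              rw [hn]; exact_mod_cast Fintype.card_pos_iff.2 ⟨a0⟩
            have hlb := (w_bounds I w hw a0 q haccq).1
            have : (0 : ℤ) < w a0 q := by nlinarith
            simpa using this
          | some p =>
            rw [hMa, hM'a] at hd2
            have hd2' : I.acc a0 q ∧ I.acc a0 p ∧ I.rk a0 q < I.rk a0 p := hd2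
            have := w_strict I w hw a0 p q hd2'.2.1 hd2'.1 hd2'.2.2
            simpa using this
    exact absurd (hmax M' hM') (not_le.2 key)
end

section
/- Let M be a matching in a house allocation instance with n applicants, let U(M) = {a ∈ A : M(a) = a} be the set of applicants unmatched by M, and define edge weights by: for a ∉ U(M) and p ∈ N_a, w({a,p}) = 2 if p ≻_a M(a), w({a,p}) = 1 if p = M(a), w({a,p}) = 0 if M(a) ≻_a p; and for a ∈ U(M) and p ∈ N_a, w({a,p}) = 1. Then w(M) = n − |U(M)|, and a matching M′ is more popular than M if and only if w(M′) > n − |U(M)|. -/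
open scoped Classical

/-- Lemma 2 (popularity-verification case): given a matching `M`, weight the edge
`{a, p}` by `2` if `a` prefers `p` to `M(a)`, by `1` if `p = M(a)`, by `0` if `a`
prefers `M(a)` to `p`, and by `1` for all edges at applicants unmatched in `M`.
Then `w(M) = n − |U(M)|`, and a matching `M'` is more popular than `M` iff
`w(M') > n − |U(M)|`. -/
theorem stmt_3 {A P : Type} [Fintype A] [Fintype P] (I : HA A P) (hstrict : I.Strict)
    (M : A → Option P) (hM : I.IsMatching M) (w : A → P → ℤ)
    (hw_better : ∀ a p q, M a = some q → I.acc a p →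
      I.Prefers a (some p) (some q) → w a p = 2)
    (hw_same : ∀ a q, M a = some q → w a q = 1)
    (hw_worse : ∀ a p q, M a = some q → I.acc a p →
      I.Prefers a (some q) (some p) → w a p = 0)
    (hw_unmatched : ∀ a p, M a = none → I.acc a p → w a p = 1) :
    HA.weight w M =
      (Fintype.card A : ℤ) - ((Finset.univ.filter fun a => M a = none).card : ℤ) ∧
    ∀ M', I.IsMatching M' →
      (I.MorePopular M' M ↔
        HA.weight w M' >
          (Fintype.card A : ℤ) - ((Finset.univ.filter fun a => M a = none).card : ℤ)) := by
  have key : ∀ (M' : A → Option P), (∀ a p, M' a = some p → I.acc a p) →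
      HA.weight w M' =
        ((Fintype.card A : ℤ) - ((Finset.univ.filter fun a => M a = none).card : ℤ))
        + ((Finset.univ.filter fun a => I.Prefers a (M' a) (M a)).card : ℤ)
        - ((Finset.univ.filter fun a => I.Prefers a (M a) (M' a)).card : ℤ) := by
    intro M' hM'
    have hpt : ∀ a, ((M' a).elim 0 (w a) : ℤ) =
        (if M a = none then 0 else 1)
        + (if I.Prefers a (M' a) (M a) then 1 else 0)
        - (if I.Prefers a (M a) (M' a) then 1 else 0) := by
      intro a
      rcases hq : M a with _ | q <;> rcases hp : M' a with _ | p <;>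
        simp only [hq, hp, Option.elim]
      · simp [HA.Prefers]
      · have hacc := hM' a p hp
        simp [HA.Prefers, hacc, hw_unmatched a p hq hacc]
      · have hacc := hM.1 a q hq
        simp [HA.Prefers, hacc]
      · have haccp := hM' a p hp
        have haccq := hM.1 a q hq
        rcases lt_trichotomy (I.rk a p) (I.rk a q) with h | h | h
        · have h1 : I.Prefers a (some p) (some q) := ⟨haccp, haccq, h⟩
          have h2 : ¬ I.Prefers a (some q) (some p) := by
            rintro ⟨_, _, h'⟩; omega
          rw [hw_better a p q hq haccp h1]
          simp [h1, h2]
        · have hpq : p = q := hstrict a p q haccp haccq h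
          subst hpq
          have h2 : ¬ I.Prefers a (some p) (some p) := by
            rintro ⟨_, _, h'⟩; omega
          rw [hw_same a p hq]
          simp [h2]
        · have h1 : I.Prefers a (some q) (some p) := ⟨haccq, haccp, h⟩
          have h2 : ¬ I.Prefers a (some p) (some q) := by
            rintro ⟨_, _, h'⟩; omega
          rw [hw_worse a p q hq haccp h1]
          simp [h1, h2]
    unfold HA.weight
    rw [Finset.sum_congr rfl fun a _ => hpt a]
    rw [Finset.sum_sub_distrib, Finset.sum_add_distrib]
    have h1 : (∑ a : A, if M a = none then (0 : ℤ) else 1) =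
        (Fintype.card A : ℤ) - ((Finset.univ.filter fun a => M a = none).card : ℤ) := by
      have : (∑ a : A, if M a = none then (0 : ℤ) else 1) =
          ∑ a : A, ((1 : ℤ) - if M a = none then 1 else 0) := by
        apply Finset.sum_congr rfl
        intro a _
        by_cases h : M a = none <;> simp [h]
      rw [this, Finset.sum_sub_distrib, Finset.sum_boole]
      rw [Finset.sum_const, Finset.card_univ, nsmul_eq_mul, mul_one]
    rw [h1, Finset.sum_boole, Finset.sum_boole]
  constructor
  · have hz : ∀ a, ¬ I.Prefers a (M a) (M a) := by
      intro a
      rcases h : M a with _ | q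
      · simp [HA.Prefers]
      · rintro ⟨_, _, h'⟩; omega
    rw [key M hM.1]
    have he : (Finset.univ.filter fun a => I.Prefers a (M a) (M a)) = ∅ :=
      Finset.filter_false_of_mem fun a _ => hz a
    rw [he]
    simp
  · intro M' hM'
    rw [key M' hM'.1]
    unfold HA.MorePopular
    constructor <;> intro h <;> omega
end

section
/- Let M be a matching in a house allocation instance with n applicants, let U(M) = {a ∈ A : M(a) = a} be the set of applicants unmatched by M, and define edge weights by: for a ∉ U(M) and p ∈ N_a, w({a,p}) = n+1 if p ≻_a M(a), w({a,p}) = n if p = M(a), w({a,p}) = 0 if M(a) ≻_a p; and for a ∈ U(M) and p ∈ N_a, w({a,p}) = 1. Then w(M) = n(n − |U(M)|), and a matching M′ dominates M if and only if w(M′) > n(n − |U(M)|). -/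
open scoped Classical

/-- Lemma 2 (Pareto-optimality-verification case): given a matching `M` in an instance
with `n` applicants, weight the edge `{a, p}` by `n+1` if `a` prefers `p` to `M(a)`,
by `n` if `p = M(a)`, by `0` if `a` prefers `M(a)` to `p`, and by `1` for all edges at
applicants unmatched in `M`.  Then `w(M) = n·(n − |U(M)|)`, and a matching `M'`
dominates `M` iff `w(M') > n·(n − |U(M)|)`. -/
theorem stmt_4 {A P : Type} [Fintype A] [Fintype P] (I : HA A P) (hstrict : I.Strict)
    (M : A → Option P) (hM : I.IsMatching M) (w : A → P → ℤ)
    (hw_better : ∀ a p q, M a = some q → I.acc a p →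
      I.Prefers a (some p) (some q) → w a p = (Fintype.card A : ℤ) + 1)
    (hw_same : ∀ a q, M a = some q → w a q = (Fintype.card A : ℤ))
    (hw_worse : ∀ a p q, M a = some q → I.acc a p →
      I.Prefers a (some q) (some p) → w a p = 0)
    (hw_unmatched : ∀ a p, M a = none → I.acc a p → w a p = 1) :
    HA.weight w M =
      (Fintype.card A : ℤ) *
        ((Fintype.card A : ℤ) - ((Finset.univ.filter fun a => M a = none).card : ℤ)) ∧
    ∀ M', I.IsMatching M' →
      (I.Dominates M' M ↔
        HA.weight w M' >
          (Fintype.card A : ℤ) *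
            ((Fintype.card A : ℤ) -
              ((Finset.univ.filter fun a => M a = none).card : ℤ))) := by
    classical
  obtain ⟨hMacc, -⟩ := hM
  set n : ℤ := (Fintype.card A : ℤ) with hn
  set U : Finset A := Finset.univ.filter fun a => M a = none with hU
  have hnatsplit : U.card + (Finset.univ.filter fun a => ¬ M a = none).card
      = Fintype.card A := by
    rw [← Finset.card_univ (α := A), hU]
    exact Finset.card_filter_add_card_filter_not _
  have hmcard : ((Finset.univ.filter fun a => ¬ M a = none).card : ℤ) = n - U.card := by
    rw [hn]; zify at hnatsplit; linarith
  have hsum : ∀ c d : ℤ, (∑ a : A, (if M a = none then c else d))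
      = c * U.card + d * (n - U.card) := by
    intro c d
    rw [Finset.sum_ite, Finset.sum_const, Finset.sum_const, ← hmcard, ← hU]
    push_cast
    ring
  have hnn : (0:ℤ) ≤ n := by rw [hn]; exact Int.natCast_nonneg _
  have tri : ∀ a p q, M a = some q → I.acc a p →
      (I.Prefers a (some p) (some q) ∧ w a p = n + 1) ∨ (p = q) ∨
      (I.Prefers a (some q) (some p) ∧ w a p = 0) := by
    intro a p q hq hp
    have hq' := hMacc a q hq
    rcases lt_trichotomy (I.rk a p) (I.rk a q) with h | h | h
    · exact Or.inl ⟨⟨hp, hq', h⟩, hw_better a p q hq hp ⟨hp, hq', h⟩⟩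
    · exact Or.inr (Or.inl (hstrict a p q hp hq' h))
    · exact Or.inr (Or.inr ⟨⟨hq', hp, h⟩, hw_worse a p q hq hp ⟨hq', hp, h⟩⟩)
  have h1 : HA.weight w M = n * (n - (U.card : ℤ)) := by
    unfold HA.weight
    have hpt : ∀ a : A, (M a).elim 0 (w a) = (if M a = none then (0:ℤ) else n) := by
      intro a
      cases hMa : M a with
      | none => simp
      | some q => simp [hw_same a q hMa]
    rw [Finset.sum_congr rfl (fun a _ => hpt a), hsum 0 n]
    ring
  refine ⟨h1, fun M' hM' => ?_⟩
  obtain ⟨hM'acc, -⟩ := hM'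
  have hwM' : HA.weight w M' = ∑ a : A, (M' a).elim 0 (w a) := rfl
  constructor
  · rintro ⟨hnone, a0, hbet⟩
    have hlt : (∑ a : A, (if M a = none then (0:ℤ) else n))
        < ∑ a : A, (M' a).elim 0 (w a) := by
      apply Finset.sum_lt_sum
      · intro a _
        cases hMa : M a with
        | none =>
          cases hM'a : M' a with
          | none => simp
          | some p =>
            have := hw_unmatched a p hMa (hM'acc a p hM'a)
            simp [this]
        | some q =>
          have hna := hnone a
          rw [hMa] at hna
          cases hM'a : M' a with
          | none =>
            rw [hM'a] at hna
            exact absurd (hMacc a q hMa) hna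
          | some p =>
            rw [hM'a] at hna
            rcases tri a p q hMa (hM'acc a p hM'a) with ⟨_, hw⟩ | heq | ⟨hpref, _⟩
            · simp only [Option.elim_some, hw, reduceCtorEq, if_false]; linarith
            · subst heq; simp [hw_same a p hMa]
            · exact absurd hpref hna
      · refine ⟨a0, Finset.mem_univ a0, ?_⟩
        cases hMa : M a0 with
        | none =>
          rw [hMa] at hbet
          cases hM'a : M' a0 with
          | none => rw [hM'a] at hbet; exact absurd hbet (by simp [HA.Prefers])
          | some p =>
            rw [hM'a] at hbet
            have hacc : I.acc a0 p := hbet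
            have := hw_unmatched a0 p hMa hacc
            simp [this]
        | some q =>
          rw [hMa] at hbet
          cases hM'a : M' a0 with
          | none => rw [hM'a] at hbet; exact absurd hbet (by simp [HA.Prefers])
          | some p =>
            rw [hM'a] at hbet
            have := hw_better a0 p q hMa hbet.1 hbet
            simp [this]
    rw [hwM', gt_iff_lt,
      show n * (n - (U.card : ℤ)) = ∑ a : A, (if M a = none then (0:ℤ) else n) from by
        rw [hsum 0 n]; ring]
    exact hlt
  · intro hgt
    by_contra hdom
    rw [HA.Dominates] at hdom
    push_neg at hdom
    by_cases hP : ∀ a, ¬ I.Prefers a (M a) (M' a)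
    · have hQ := hdom hP
      have hle : (∑ a : A, (M' a).elim 0 (w a))
          ≤ ∑ a : A, (if M a = none then (0:ℤ) else n) := by
        apply Finset.sum_le_sum
        intro a _
        cases hMa : M a with
        | none =>
          cases hM'a : M' a with
          | none => simp
          | some p =>
            exfalso
            have hacc : I.acc a p := hM'acc a p hM'a
            have := hQ a
            rw [hMa, hM'a] at this
            exact this hacc
        | some q =>
          cases hM'a : M' a with
          | none => simpa using hnn
          | some p =>
            have hQa := hQ a; rw [hMa, hM'a] at hQa
            rcases tri a p q hMa (hM'acc a p hM'a) with ⟨hpref, _⟩ | heq | ⟨_, hw⟩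
            · exact absurd hpref hQa
            · subst heq; simp [hw_same a p hMa]
            · simp only [Option.elim_some, hw, reduceCtorEq, if_false]; linarith
      rw [hwM'] at hgt
      have : (∑ a : A, (if M a = none then (0:ℤ) else n)) = n * (n - (U.card : ℤ)) := by
        rw [hsum 0 n]; ring
      linarith
    · push_neg at hP
      obtain ⟨a0, ha0⟩ := hP
      obtain ⟨q0, hq0⟩ : ∃ q0, M a0 = some q0 := by
        cases hMa : M a0 with
        | none => rw [hMa] at ha0; exact absurd ha0 (by simp [HA.Prefers])
        | some q => exact ⟨q, rfl⟩
      rw [hq0] at ha0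
      have hg0 : (M' a0).elim 0 (w a0) = 0 := by
        cases hM'a : M' a0 with
        | none => simp
        | some p =>
          rw [hM'a] at ha0
          simp [hw_worse a0 p q0 hq0 (hM'acc a0 p hM'a) ha0]
      have hptbd : ∀ a : A, (M' a).elim 0 (w a)
          ≤ (if M a = none then (1:ℤ) else n + 1) := by
        intro a
        cases hMa : M a with
        | none =>
          cases hM'a : M' a with
          | none => simp
          | some p => simp [hw_unmatched a p hMa (hM'acc a p hM'a)]
        | some q =>
          cases hM'a : M' a with
          | none => simp; linarith
          | some p =>
            rcases tri a p q hMa (hM'acc a p hM'a) with ⟨_, hw⟩ | heq | ⟨_, hw⟩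
            · simp [hw]
            · subst heq; simp only [Option.elim_some, hw_same a p hMa, reduceCtorEq, if_false]; linarith
            · simp only [Option.elim_some, hw, reduceCtorEq, if_false]; linarith
      have key : (∑ a : A, (M' a).elim 0 (w a))
          ≤ (∑ a : A, (if M a = none then (1:ℤ) else n + 1)) - (n + 1) := by
        have hmem : a0 ∈ (Finset.univ : Finset A) := Finset.mem_univ a0
        rw [← Finset.add_sum_erase _ _ hmem, hg0, zero_add]
        have he : (∑ a ∈ Finset.univ.erase a0, (if M a = none then (1:ℤ) else n + 1))
            = (∑ a : A, (if M a = none then (1:ℤ) else n + 1))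
              - (if M a0 = none then (1:ℤ) else n + 1) :=
          Finset.sum_erase_eq_sub hmem
        calc (∑ a ∈ Finset.univ.erase a0, (M' a).elim 0 (w a))
            ≤ ∑ a ∈ Finset.univ.erase a0, (if M a = none then (1:ℤ) else n + 1) :=
              Finset.sum_le_sum (fun a _ => hptbd a)
          _ = (∑ a : A, (if M a = none then (1:ℤ) else n + 1))
              - (if M a0 = none then (1:ℤ) else n + 1) := he
          _ = (∑ a : A, (if M a = none then (1:ℤ) else n + 1)) - (n + 1) := by
              rw [hq0]; simp
      rw [hsum 1 (n+1)] at key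
      rw [hwM'] at hgt
      linarith
end

section
/- Let (X, 𝒯) be an X3C instance in which every element appears in exactly three sets. Construct the house allocation instance with one project p_T for each set T ∈ 𝒯 with ℓ_{p_T} = u_{p_T} = 3, and one applicant a_x for each element x ∈ X whose preference list consists of the three projects p_{T_i}, p_{T_j}, p_{T_k} for the sets T_i, T_j, T_k containing x, in an arbitrary fixed order. Then (X, 𝒯) has an exact cover if and only if the constructed instance has a perfect Pareto optimal matching (equivalently, a perfect matching). -/
open scoped Classical

/-- An exact cover of the X3C instance `(X, T)`: a subfamily of `T` containing every
element of `X` in exactly one of its sets. -/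
def ExactCover {m n : ℕ} (T : Fin n → Finset (Fin (3 * m))) : Prop :=
  ∃ S : Finset (Fin n), ∀ x : Fin (3 * m), ∃! i, i ∈ S ∧ x ∈ T i

/-- The house allocation instance built from an X3C instance: one project per set
(with lower and upper quota 3), one applicant per element whose acceptable projects
are the three sets containing it, ranked by the given (arbitrary fixed) order `rk`. -/
def I8 {m n : ℕ} (T : Fin n → Finset (Fin (3 * m))) (rk : Fin (3 * m) → Fin n → ℕ) :
    HA (Fin (3 * m)) (Fin n) where
  acc x i := x ∈ T i
  rk := rk
  lq _ := 3
  uq _ := 3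

lemma exists_pareto_perfect {A P : Type} [Fintype A] [Fintype P] (I : HA A P)
    (h : ∃ M, I.IsMatching M ∧ HA.Perfect M) :
    ∃ M, I.ParetoOptimal M ∧ HA.Perfect M := by
  classical
  set f : (A → Option P) → ℕ := fun M => ∑ a, (M a).elim 0 (I.rk a) with hf
  obtain ⟨M₁, hM₁, hP₁⟩ := h
  have hne : (Finset.univ.filter fun M : A → Option P =>
      I.IsMatching M ∧ HA.Perfect M).Nonempty :=
    ⟨M₁, by simp [hM₁, hP₁]⟩
  obtain ⟨M₀, hM₀mem, hmin⟩ := Finset.exists_min_image _ f hne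
  simp only [Finset.mem_filter, Finset.mem_univ, true_and] at hM₀mem
  obtain ⟨hM₀, hP₀⟩ := hM₀mem
  refine ⟨M₀, ⟨hM₀, ?_⟩, hP₀⟩
  rintro M' hM' ⟨hnoworse, a₀, hbetter⟩
  have hP' : HA.Perfect M' := by
    intro a hna
    obtain ⟨p, hp⟩ := Option.ne_none_iff_exists'.mp (hP₀ a)
    refine hnoworse a ?_
    rw [hp, hna]
    exact hM₀.1 a p hp
  have hmem' : M' ∈ Finset.univ.filter fun M : A → Option P =>
      I.IsMatching M ∧ HA.Perfect M := by simp [hM', hP']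
  have hlt : f M' < f M₀ := by
    apply Finset.sum_lt_sum
    · intro a _
      obtain ⟨p, hp⟩ := Option.ne_none_iff_exists'.mp (hP₀ a)
      obtain ⟨q, hq⟩ := Option.ne_none_iff_exists'.mp (hP' a)
      have h1 := hnoworse a
      rw [hp, hq] at h1
      change ¬ (I.acc a p ∧ I.acc a q ∧ I.rk a p < I.rk a q) at h1
      push_neg at h1
      rw [hp, hq]
      exact h1 (hM₀.1 a p hp) (hM'.1 a q hq)
    · refine ⟨a₀, Finset.mem_univ _, ?_⟩
      obtain ⟨p, hp⟩ := Option.ne_none_iff_exists'.mp (hP₀ a₀)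
      obtain ⟨q, hq⟩ := Option.ne_none_iff_exists'.mp (hP' a₀)
      rw [hp, hq] at hbetter ⊢
      exact hbetter.2.2
  exact absurd (hmin M' hmem') (not_le.mpr hlt)

/-- Theorem: the X3C instance (each element occurring in exactly three sets) has an
exact cover iff the constructed house allocation instance has a perfect Pareto optimal
matching. -/
theorem stmt_8 (m n : ℕ) (T : Fin n → Finset (Fin (3 * m)))
    (hT3 : ∀ i, (T i).card = 3)
    (hx3 : ∀ x : Fin (3 * m), (Finset.univ.filter fun i => x ∈ T i).card = 3)
    (rk : Fin (3 * m) → Fin n → ℕ)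
    (hrk : ∀ x i j, x ∈ T i → x ∈ T j → rk x i = rk x j → i = j) :
    ExactCover T ↔ ∃ M, (I8 T rk).ParetoOptimal M ∧ HA.Perfect M := by
  constructor
  · rintro ⟨S, hS⟩
    apply exists_pareto_perfect
    classical
    set c : Fin (3 * m) → Fin n := fun x => (hS x).exists.choose with hc
    have hcs : ∀ x, c x ∈ S ∧ x ∈ T (c x) := fun x => (hS x).exists.choose_spec
    refine ⟨fun x => some (c x), ⟨?_, ?_⟩, fun a => by simp⟩
    · intro a p hp
      have : c a = p := by simpa using hp
      rw [← this]; exact (hcs a).2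
    · intro p
      by_cases hpS : p ∈ S
      · right
        have : HA.assigned (fun x => some (c x)) p = T p := by
          ext a
          simp only [HA.assigned, Finset.mem_filter, Finset.mem_univ, true_and,
            Option.some.injEq]
          constructor
          · rintro rfl; exact (hcs a).2
          · intro haT
            exact (hS a).unique (hcs a) ⟨hpS, haT⟩
        rw [this, hT3 p]
        exact ⟨le_refl 3, le_refl 3⟩
      · left
        rw [Finset.card_eq_zero]
        ext a
        simp only [HA.assigned, Finset.mem_filter, Finset.mem_univ, true_and,
          Option.some.injEq, Finset.notMem_empty, iff_false]
        intro h
        exact hpS (h ▸ (hcs a).1)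
  · rintro ⟨M, ⟨⟨hacc, hquota⟩, _⟩, hperf⟩
    refine ⟨Finset.univ.filter fun i => HA.OpenProj M i, fun x => ?_⟩
    obtain ⟨i, hi⟩ := Option.ne_none_iff_exists'.mp (hperf x)
    have hopen : ∀ j, HA.OpenProj M j → HA.assigned M j = T j := by
      intro j hj
      have hsub : HA.assigned M j ⊆ T j := by
        intro a ha
        simp only [HA.assigned, Finset.mem_filter, Finset.mem_univ, true_and] at ha
        exact hacc a j ha
      have hcardne : (HA.assigned M j).card ≠ 0 := by
        obtain ⟨a, ha⟩ := hj
        rw [Finset.card_ne_zero]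
        exact ⟨a, by simp [HA.assigned, ha]⟩
      rcases hquota j with h0 | ⟨h1, h2⟩
      · exact absurd h0 hcardne
      · exact Finset.eq_of_subset_of_card_le hsub (by rw [hT3 j]; exact h1)
    refine ⟨i, ⟨Finset.mem_filter.mpr ⟨Finset.mem_univ _, ⟨x, hi⟩⟩, hacc x i hi⟩, ?_⟩
    rintro j ⟨hjS, hxTj⟩
    have hjopen : HA.OpenProj M j := (Finset.mem_filter.mp hjS).2
    have : x ∈ HA.assigned M j := (hopen j hjopen).symm ▸ hxTj
    simp only [HA.assigned, Finset.mem_filter, Finset.mem_univ, true_and] at this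
    rw [this] at hi
    exact (Option.some.injEq _ _ ▸ hi : j = i)
end

section
/- Let G = (V, E) be a (not necessarily bipartite) graph in which each vertex v has a strict preference list over its neighbors, with every neighbor preferred to being unmatched. Construct the house allocation instance with one applicant a_v per vertex v ∈ V and one project p_e per edge e ∈ E with ℓ_{p_e} = u_{p_e} = 2, where the preference list of a_v ranks the projects p_{{v,u}} for neighbors u of v in the same order in which v ranks those neighbors. Then G admits a popular matching if and only if the constructed house allocation instance admits a popular matching; moreover, under the bijection sending a matching N of G to the matching M with M(a_u) = p_{{u,v}} = M(a_v) whenever N(u) = v, every vertex is matched to its i-th choice in N exactly when the corresponding applicant is matched to her i-th choice in M. -/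
/-!
A matching `N` of the graph and the assignment `Phi G N` give every vertex the same
rank, since applicant `a_v` ranks `p_{v,u}` as `v` ranks `u`; hence `Phi` turns the
comparison of two matchings of `G` into the comparison of their images. Because both
quotas of `p_{u,v}` equal `2` and only `a_u`, `a_v` accept it, an open project holds
exactly its two endpoints, so every feasible assignment is `Phi G N` for some
matching `N`. A map from matchings onto feasible assignments that preserves "more
popular" preserves popularity in both directions.
-/

open scoped Classical

section Graph

variable {V : Type} [Fintype V] [DecidableEq V]

/-- Vertex `v` strictly prefers assignment `o₁` to `o₂` in the roommates-style
instance on the graph `G` with ranks `rkG` (`none` = unmatched, every neighbor is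
preferred to being unmatched). -/
def GPrefers (G : SimpleGraph V) (rkG : V → V → ℕ) (v : V) :
    Option V → Option V → Prop
  | some u, some w => G.Adj v u ∧ G.Adj v w ∧ rkG v u < rkG v w
  | some u, none => G.Adj v u
  | none, _ => False

/-- A matching in the graph `G`, encoded by its partner function. -/
def GIsMatching (G : SimpleGraph V) (N : V → Option V) : Prop :=
  ∀ v u, N v = some u → G.Adj v u ∧ N u = some v

/-- `N'` is more popular than `N` in the graph instance. -/
def GMorePopular (G : SimpleGraph V) (rkG : V → V → ℕ) (N' N : V → Option V) : Prop :=
  (Finset.univ.filter fun v => GPrefers G rkG v (N v) (N' v)).card <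
  (Finset.univ.filter fun v => GPrefers G rkG v (N' v) (N v)).card

/-- A popular matching in the graph instance. -/
def GPopular (G : SimpleGraph V) (rkG : V → V → ℕ) (N : V → Option V) : Prop :=
  GIsMatching G N ∧ ∀ N', GIsMatching G N' → ¬ GMorePopular G rkG N' N

/-- The house allocation instance built from the graph `G`: one applicant per vertex,
one project (with lower and upper quota 2) per edge, an applicant `a_v` accepting
exactly the projects of edges incident to `v`, ranked as `v` ranks the corresponding
neighbors. -/
noncomputable def I9 (G : SimpleGraph V) (rkG : V → V → ℕ) :
    HA V {e : Sym2 V // e ∈ G.edgeSet} where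
  acc v e := ∃ u, G.Adj v u ∧ e.val = s(v, u)
  rk v e := Sym2.lift
    ⟨fun x y => max (if x = v then rkG v y else 0) (if y = v then rkG v x else 0),
      fun _ _ => max_comm _ _⟩ e.val
  lq _ := 2
  uq _ := 2

/-- The correspondence sending a matching of the graph to the matching of the house
allocation instance in which `a_u` and `a_v` are assigned to `p_{u,v}` whenever
`u` and `v` are matched to each other. -/
noncomputable def Phi (G : SimpleGraph V) (N : V → Option V) (v : V) :
    Option {e : Sym2 V // e ∈ G.edgeSet} :=
  (N v).bind fun u => if h : s(v, u) ∈ G.edgeSet then some ⟨s(v, u), h⟩ else none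

end Graph

theorem HA.mem_assigned {A P : Type} [Fintype A] {M : A → Option P} {p : P} {a : A} :
    a ∈ HA.assigned M p ↔ M a = some p := by
  simp [HA.assigned]

theorem HA.assigned_eq_of_subset {A P : Type} [Fintype A] {I : HA A P} {M : A → Option P}
    (hM : I.IsMatching M) {p : P} {a : A} (ha : M a = some p) {s : Finset A}
    (hsub : HA.assigned M p ⊆ s) (hs : s.card ≤ I.lq p) : HA.assigned M p = s := by
  have hne : (HA.assigned M p).card ≠ 0 :=
    Finset.card_ne_zero_of_mem (HA.mem_assigned.mpr ha)
  have hlq : I.lq p ≤ (HA.assigned M p).card := ((hM.2 p).resolve_left hne).1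
  exact Finset.eq_of_subset_of_card_le hsub (hs.trans hlq)

section PhiCorrespondence

variable {V : Type} {G : SimpleGraph V}

local notation "Edge" => {e : Sym2 V // e ∈ G.edgeSet}

theorem I9_acc_mk_iff [DecidableEq V] (rkG : V → V → ℕ) {v u : V} (h : s(v, u) ∈ G.edgeSet) :
    (I9 G rkG).acc v ⟨s(v, u), h⟩ ↔ G.Adj v u := by
  refine ⟨fun ⟨w, hw, hs⟩ => ?_, fun hvu => ⟨u, hvu, rfl⟩⟩
  rcases Sym2.eq_iff.mp hs with ⟨-, rfl⟩ | ⟨rfl, -⟩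
  · exact hw
  · exact absurd hw (G.loopless.irrefl _)

theorem I9_rk_mk [DecidableEq V] (rkG : V → V → ℕ) {v u : V} (h : s(v, u) ∈ G.edgeSet) :
    (I9 G rkG).rk v ⟨s(v, u), h⟩ = rkG v u := by
  have hne : u ≠ v := (G.ne_of_adj (G.mem_edgeSet.mp h)).symm
  simp [I9, hne]

theorem Phi_of_eq_some {N : V → Option V} {v u : V} (hN : N v = some u) (h : G.Adj v u) :
    Phi G N v = some ⟨s(v, u), G.mem_edgeSet.mpr h⟩ := by
  simp [Phi, hN, h]

theorem Phi_of_eq_none {N : V → Option V} {v : V} (hN : N v = none) : Phi G N v = none := by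
  simp [Phi, hN]

theorem Phi_eq_some_iff {N : V → Option V} (hN : GIsMatching G N) {v : V} {p : Edge} :
    Phi G N v = some p ↔ ∃ u, N v = some u ∧ p.val = s(v, u) := by
  rcases hv : N v with _ | u
  · simp [Phi_of_eq_none hv]
  · rw [Phi_of_eq_some hv (hN v u hv).1]
    simp [Subtype.ext_iff, eq_comm]

theorem assigned_Phi_mk [Fintype V] [DecidableEq V] {N : V → Option V} (hN : GIsMatching G N) {x y : V}
    (he : s(x, y) ∈ G.edgeSet) :
    HA.assigned (Phi G N) ⟨s(x, y), he⟩ = if N x = some y then {x, y} else ∅ := by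
  have hsymm : N y = some x ↔ N x = some y := ⟨fun h => (hN y x h).2, fun h => (hN x y h).2⟩
  ext a
  rw [HA.mem_assigned, Phi_eq_some_iff hN]
  constructor
  · rintro ⟨u, hu, hs⟩
    rcases Sym2.eq_iff.mp hs with ⟨rfl, rfl⟩ | ⟨rfl, rfl⟩
    · simp [hu]
    · simp [hsymm.mp hu]
  · split_ifs with hxy
    · rintro ha
      rcases Finset.mem_insert.mp ha with rfl | ha
      · exact ⟨y, hxy, rfl⟩
      · rw [Finset.mem_singleton.mp ha]
        exact ⟨x, hsymm.mpr hxy, Sym2.eq_swap⟩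
    · simp

theorem isMatching_Phi [Fintype V] [DecidableEq V] (rkG : V → V → ℕ) {N : V → Option V}
    (hN : GIsMatching G N) : (I9 G rkG).IsMatching (Phi G N) := by
  refine ⟨fun v p hp => ?_, fun ⟨e, he⟩ => ?_⟩
  · obtain ⟨u, hu, hpu⟩ := (Phi_eq_some_iff hN).mp hp
    exact ⟨u, (hN v u hu).1, hpu⟩
  · induction e using Sym2.ind with
    | _ x y =>
      rw [assigned_Phi_mk hN he]
      split_ifs
      · rw [Finset.card_pair (G.ne_of_adj (G.mem_edgeSet.mp he))]
        exact Or.inr ⟨le_rfl, le_rfl⟩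
      · exact Or.inl rfl

theorem I9_isMatching_partner [Fintype V] [DecidableEq V] {rkG : V → V → ℕ}
    {M : V → Option Edge} (hM : (I9 G rkG).IsMatching M) {x y : V} (he : s(x, y) ∈ G.edgeSet)
    (hx : M x = some ⟨s(x, y), he⟩) : M y = some ⟨s(x, y), he⟩ := by
  have hsub : HA.assigned M ⟨s(x, y), he⟩ ⊆ {x, y} := by
    intro a ha
    obtain ⟨u, -, hu⟩ := hM.1 a _ (HA.mem_assigned.mp ha)
    have : a ∈ s(x, y) := by
      rw [show s(x, y) = _ from hu]
      exact Sym2.mem_mk_left a u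
    simpa using this
  have hcard : ({x, y} : Finset V).card ≤ (I9 G rkG).lq ⟨s(x, y), he⟩ :=
    Finset.card_le_two
  have hy : y ∈ HA.assigned M ⟨s(x, y), he⟩ := by
    rw [HA.assigned_eq_of_subset hM hx hsub hcard]
    simp
  exact HA.mem_assigned.mp hy

noncomputable def PhiInv (M : V → Option Edge) (v : V) : Option V :=
  (M v).bind fun p => if h : v ∈ p.val then some (Sym2.Mem.other h) else none

theorem PhiInv_spec [Fintype V] [DecidableEq V] {rkG : V → V → ℕ} {M : V → Option Edge}
    (hM : (I9 G rkG).IsMatching M) {v : V} {p : Edge} (hv : M v = some p) :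
    ∃ u, PhiInv M v = some u ∧ p.val = s(v, u) ∧ G.Adj v u := by
  obtain ⟨w, -, hpw⟩ := hM.1 v p hv
  have hmem : v ∈ p.val := by
    rw [hpw]
    exact Sym2.mem_mk_left v w
  have hp : p.val = s(v, Sym2.Mem.other hmem) := (Sym2.other_spec hmem).symm
  refine ⟨_, by simp [PhiInv, hv, hmem], hp, G.mem_edgeSet.mp ?_⟩
  rw [← hp]
  exact p.2

theorem PhiInv_of_eq_none {M : V → Option Edge} {v : V} (hv : M v = none) :
    PhiInv M v = none := by
  simp [PhiInv, hv]

theorem gIsMatching_PhiInv [Fintype V] [DecidableEq V] {rkG : V → V → ℕ} {M : V → Option Edge}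
    (hM : (I9 G rkG).IsMatching M) : GIsMatching G (PhiInv M) := by
  intro v u hvu
  rcases hv : M v with _ | p
  · simp [PhiInv_of_eq_none hv] at hvu
  obtain ⟨u', hu', hpu, hadj⟩ := PhiInv_spec hM hv
  obtain rfl : u = u' := Option.some_inj.mp (hvu.symm.trans hu')
  have he : s(v, u) ∈ G.edgeSet := G.mem_edgeSet.mpr hadj
  have hvp : M v = some ⟨s(v, u), he⟩ := hv.trans (congrArg some (Subtype.ext hpu))
  obtain ⟨w, hw, hpw, -⟩ := PhiInv_spec hM (I9_isMatching_partner hM he hvp)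
  refine ⟨hadj, hw.trans (congrArg some ?_)⟩
  rcases Sym2.eq_iff.mp (hpw : s(v, u) = s(u, w)) with ⟨rfl, -⟩ | ⟨rfl, -⟩
  · exact absurd hadj (G.loopless.irrefl v)
  · rfl

theorem Phi_PhiInv [Fintype V] [DecidableEq V] {rkG : V → V → ℕ} {M : V → Option Edge}
    (hM : (I9 G rkG).IsMatching M) : Phi G (PhiInv M) = M := by
  funext v
  rcases hv : M v with _ | p
  · exact Phi_of_eq_none (PhiInv_of_eq_none hv)
  · obtain ⟨u, hu, hpu, hadj⟩ := PhiInv_spec hM hv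
    rw [Phi_of_eq_some hu hadj]
    exact congrArg some (Subtype.ext hpu.symm)

theorem exists_Phi_eq [Fintype V] [DecidableEq V] {rkG : V → V → ℕ} {M : V → Option Edge}
    (hM : (I9 G rkG).IsMatching M) : ∃ N, GIsMatching G N ∧ Phi G N = M :=
  ⟨PhiInv M, gIsMatching_PhiInv hM, Phi_PhiInv hM⟩

theorem I9_prefers_Phi_iff [DecidableEq V] (rkG : V → V → ℕ) {N N' : V → Option V}
    (hN : GIsMatching G N) (hN' : GIsMatching G N') (v : V) :
    (I9 G rkG).Prefers v (Phi G N v) (Phi G N' v) ↔ GPrefers G rkG v (N v) (N' v) := by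
  rcases hv : N v with _ | u
  · simp [Phi_of_eq_none hv, HA.Prefers, GPrefers]
  rw [Phi_of_eq_some hv (hN v u hv).1]
  rcases hv' : N' v with _ | w
  · simp only [Phi_of_eq_none hv', HA.Prefers, GPrefers, I9_acc_mk_iff]
  · rw [Phi_of_eq_some hv' (hN' v w hv').1]
    simp only [HA.Prefers, GPrefers, I9_acc_mk_iff, I9_rk_mk]

theorem I9_morePopular_Phi_iff [Fintype V] [DecidableEq V] (rkG : V → V → ℕ)
    {N N' : V → Option V} (hN : GIsMatching G N) (hN' : GIsMatching G N') :
    (I9 G rkG).MorePopular (Phi G N') (Phi G N) ↔ GMorePopular G rkG N' N := by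
  unfold HA.MorePopular GMorePopular
  rw [Finset.filter_congr fun v _ => I9_prefers_Phi_iff rkG hN hN' v,
    Finset.filter_congr fun v _ => I9_prefers_Phi_iff rkG hN' hN v]

theorem I9_popular_Phi_iff [Fintype V] [DecidableEq V] (rkG : V → V → ℕ)
    {N : V → Option V} (hN : GIsMatching G N) :
    (I9 G rkG).Popular (Phi G N) ↔ GPopular G rkG N := by
  refine ⟨fun ⟨_, hpop⟩ => ⟨hN, fun N' hN' hmore => ?_⟩,
    fun ⟨_, hpop⟩ => ⟨isMatching_Phi rkG hN, fun M' hM' hmore => ?_⟩⟩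
  · exact hpop _ (isMatching_Phi rkG hN') ((I9_morePopular_Phi_iff rkG hN hN').mpr hmore)
  · obtain ⟨N', hN', rfl⟩ := exists_Phi_eq hM'
    exact hpop N' hN' ((I9_morePopular_Phi_iff rkG hN hN').mp hmore)

end PhiCorrespondence

section Graph

variable {V : Type} [Fintype V] [DecidableEq V]

theorem stmt_9_general (G : SimpleGraph V) (rkG : V → V → ℕ) :
    ((∃ N, GPopular G rkG N) ↔ ∃ M, (I9 G rkG).Popular M) ∧
    (∀ N, GIsMatching G N → (I9 G rkG).IsMatching (Phi G N) ∧
      ∀ v u (h : s(v, u) ∈ G.edgeSet), N v = some u →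
        (I9 G rkG).rk v ⟨s(v, u), h⟩ = rkG v u) := by
  refine ⟨⟨fun ⟨N, hN⟩ => ⟨Phi G N, (I9_popular_Phi_iff rkG hN.1).mpr hN⟩, ?_⟩,
    fun N hN => ⟨isMatching_Phi rkG hN, fun v u h _ => I9_rk_mk rkG h⟩⟩
  rintro ⟨M, hM⟩
  obtain ⟨N, hN, rfl⟩ := exists_Phi_eq hM.1
  exact ⟨N, (I9_popular_Phi_iff rkG hN).mp hM⟩

/-- Theorem: the graph admits a popular matching iff the constructed house allocation
instance does; moreover, the correspondence maps matchings to matchings and preserves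
the rank at which every matched agent is matched. -/
theorem stmt_9 (G : SimpleGraph V) (rkG : V → V → ℕ)
    (hstrict : ∀ v u w, G.Adj v u → G.Adj v w → rkG v u = rkG v w → u = w) :
    ((∃ N, GPopular G rkG N) ↔ ∃ M, (I9 G rkG).Popular M) ∧
    (∀ N, GIsMatching G N → (I9 G rkG).IsMatching (Phi G N) ∧
      ∀ v u (h : s(v, u) ∈ G.edgeSet), N v = some u →
        (I9 G rkG).rk v ⟨s(v, u), h⟩ = rkG v u) :=
  stmt_9_general G rkG

end Graph
end

section
/- Let (X, 𝒯) be an X3C instance with X = {x_1, …, x_{3m}} in which every element appears in exactly three sets and every set T ∈ 𝒯 has some T′ ∈ 𝒯 with T ∩ T′ = ∅. Construct the house allocation instance with: a project p_i (ℓ = u = 3) for each T_i ∈ 𝒯; a last-resort project p^− with ℓ = u = 6m − 1; for each x ∈ X an applicant a_x with preference list p_{i_1} ≻ p_{i_2} ≻ p_{i_3} ≻ p^−, where T_{i_1}, T_{i_2}, T_{i_3} are the three sets containing x; and 3m − 1 dummy applicants whose preference lists consist only of p^−. Then: (i) the matching assigning every applicant to p^− is popular if and only if (X, 𝒯) has no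 exact cover; and (ii) the constructed instance has a popular matching that opens exactly one project if and only if (X, 𝒯) has no exact cover. -/
open scoped Classical

/-- The house allocation instance built from an X3C instance: one project per set
(quota exactly 3), a last-resort project `p⁻` with quota exactly `6m − 1`, one
applicant per element ranking the three sets containing it (in index order) above
`p⁻`, and `3m − 1` dummy applicants whose lists consist only of `p⁻`. -/
noncomputable def I13 {m n : ℕ} (T : Fin n → Finset (Fin (3 * m))) :
    HA (Fin (3 * m) ⊕ Fin (3 * m - 1)) (Fin n ⊕ Unit) where
  acc a p :=
    match a, p with
    | Sum.inl x, Sum.inl i => x ∈ T i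
    | Sum.inl _, Sum.inr _ => True
    | Sum.inr _, Sum.inl _ => False
    | Sum.inr _, Sum.inr _ => True
  rk a p :=
    match a, p with
    | Sum.inl x, Sum.inl i => (Finset.univ.filter fun i' => i' < i ∧ x ∈ T i').card
    | Sum.inl _, Sum.inr _ => 3
    | Sum.inr _, _ => 0
  lq p :=
    match p with
    | Sum.inl _ => 3
    | Sum.inr _ => 6 * m - 1
  uq p :=
    match p with
    | Sum.inl _ => 3
    | Sum.inr _ => 6 * m - 1

/-- The matching assigning every applicant to the last-resort project `p⁻`. -/
def M13 {m n : ℕ} (T : Fin n → Finset (Fin (3 * m))) :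
    Fin (3 * m) ⊕ Fin (3 * m - 1) → Option (Fin n ⊕ Unit) :=
  fun _ => some (Sum.inr ())

/-!
Every applicant ranks every acceptable set project above `p⁻`, the dummies accept only `p⁻`,
and `p⁻` needs all `6m − 1` applicants. So a matching `M ≠ M13` closes `p⁻`; against `M13` the
applicants it places on set projects (all element applicants) prefer `M`, and all others prefer
`M13`. Hence `M` beats `M13` exactly when it seats all `3m` element applicants on set projects,
i.e. when its open set projects form an exact cover. A popular matching opening a single set
project `pᵢ` is not even Pareto optimal: the three applicants of a set disjoint from `Tᵢ` are
unmatched and can open their own project.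
-/

open Finset

namespace HA

section

variable {A P : Type} (I : HA A P)

theorem prefers_irrefl (a : A) (o : Option P) : ¬ I.Prefers a o o := by
  cases o <;> simp [Prefers]

theorem prefers_asymm {a : A} {o o' : Option P} (h : I.Prefers a o o') : ¬ I.Prefers a o' o := by
  cases o <;> cases o' <;> simp_all [Prefers]
  omega

theorem opensCount_eq_one_iff [Fintype P] {M : A → Option P} :
    opensCount M = 1 ↔ ∃ p, OpenProj M p ∧ ∀ q, OpenProj M q → q = p := by
  simp [opensCount, card_eq_one, eq_singleton_iff_unique_mem]

end

variable {A P : Type} [Fintype A] {I : HA A P} {M M' : A → Option P}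

theorem morePopular_of_card_lt_two_mul
    (h : Fintype.card A < 2 * (univ.filter fun a => I.Prefers a (M' a) (M a)).card) :
    I.MorePopular M' M := by
  have hdisj : Disjoint (univ.filter fun a => I.Prefers a (M a) (M' a))
      (univ.filter fun a => I.Prefers a (M' a) (M a)) :=
    disjoint_filter.2 fun a _ hw hb => I.prefers_asymm hw hb
  have := (card_union_of_disjoint hdisj).symm.trans_le (card_le_univ _)
  unfold MorePopular
  omega

theorem MorePopular.card_lt_two_mul
    (htotal : ∀ a, I.Prefers a (M' a) (M a) ∨ I.Prefers a (M a) (M' a))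
    (h : I.MorePopular M' M) :
    Fintype.card A < 2 * (univ.filter fun a => I.Prefers a (M' a) (M a)).card := by
  have hcover : univ = (univ.filter fun a => I.Prefers a (M' a) (M a)) ∪
      (univ.filter fun a => I.Prefers a (M a) (M' a)) := by
    rw [← filter_or, filter_true_of_mem fun a _ => htotal a]
  have := card_union_le (univ.filter fun a => I.Prefers a (M' a) (M a))
    (univ.filter fun a => I.Prefers a (M a) (M' a))
  rw [← hcover, card_univ] at this
  unfold MorePopular at h
  omega

theorem Dominates.morePopular (h : I.Dominates M' M) : I.MorePopular M' M := by
  obtain ⟨hworse, a, ha⟩ := h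
  unfold MorePopular
  rw [filter_false_of_mem fun a _ => hworse a, card_empty, card_pos]
  exact ⟨a, mem_filter.2 ⟨mem_univ a, ha⟩⟩

theorem Popular.paretoOptimal (h : I.Popular M) : I.ParetoOptimal M :=
  ⟨h.1, fun M' hM' hdom => h.2 M' hM' hdom.morePopular⟩

@[simp]
theorem mem_assigned_s13 {a : A} {p : P} : a ∈ assigned M p ↔ M a = some p := by
  simp [assigned]

theorem IsMatching.lq_le_card_assigned (hM : I.IsMatching M) {p : P} (hp : OpenProj M p) :
    I.lq p ≤ (assigned M p).card := by
  obtain ⟨a, ha⟩ := hp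
  have hne : (assigned M p).card ≠ 0 := card_ne_zero.2 ⟨a, mem_assigned_s13.2 ha⟩
  exact ((hM.2 p).resolve_left hne).1

theorem IsMatching.eq_some_of_card_le_lq (hM : I.IsMatching M) {p : P} (hp : OpenProj M p)
    (hcard : Fintype.card A ≤ I.lq p) (a : A) : M a = some p := by
  have huniv : assigned M p = univ :=
    eq_univ_of_card _ (le_antisymm (card_le_univ _) (hcard.trans (hM.lq_le_card_assigned hp)))
  exact mem_assigned_s13.1 (huniv ▸ mem_univ a)

theorem IsMatching.not_paretoOptimal_of_unmatched (hM : I.IsMatching M) {q : P}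
    (hq : ¬ OpenProj M q) {S : Finset A} (hS : S.Nonempty) (hunm : ∀ a ∈ S, M a = none)
    (hacc : ∀ a ∈ S, I.acc a q) (hlq : I.lq q ≤ S.card) (huq : S.card ≤ I.uq q) :
    ¬ I.ParetoOptimal M := by
  set M' : A → Option P := fun a => if a ∈ S then some q else M a
  have hassigned (p : P) : assigned M' p = if p = q then S else assigned M p := by
    ext a
    by_cases hp : p = q
    · subst hp
      by_cases ha : a ∈ S
      · simp [assigned, M', ha]
      · simpa [assigned, M', ha] using fun h => hq ⟨a, h⟩
    · by_cases ha : a ∈ S <;> simp [assigned, M', ha, hp, hunm, Ne.symm hp]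
  have hmatch : I.IsMatching M' := by
    refine ⟨fun a p hp => ?_, fun p => ?_⟩
    · by_cases ha : a ∈ S
      · simp only [M', ha, if_true, Option.some.injEq] at hp
        exact hp ▸ hacc a ha
      · simp only [M', ha, if_false] at hp
        exact hM.1 a p hp
    · rw [hassigned]
      split_ifs with hp
      · exact Or.inr (hp ▸ ⟨hlq, huq⟩)
      · exact hM.2 p
  refine fun hpo => hpo.2 M' hmatch ⟨fun a => ?_, ?_⟩
  · by_cases ha : a ∈ S
    · simp [M', ha, hunm a ha, Prefers]
    · simpa [M', ha] using I.prefers_irrefl a (M a)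
  · obtain ⟨a, ha⟩ := hS
    exact ⟨a, by simpa [M', ha, hunm a ha, Prefers] using hacc a ha⟩

end HA

theorem ExactCover.exists_block {m n : ℕ} {T : Fin n → Finset (Fin (3 * m))}
    (h : ExactCover T) : ∃ f : Fin (3 * m) → Fin n, ∀ x y, y ∈ T (f x) ↔ f y = f x := by
  obtain ⟨S, hS⟩ := h
  choose f hf using hS
  refine ⟨f, fun x y => ⟨fun hy => ((hf y).2 _ ⟨(hf x).1.1, hy⟩).symm, fun hxy => ?_⟩⟩
  exact hxy ▸ (hf y).1.2

section Reduction

open HA Sum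

variable {m n : ℕ} {T : Fin n → Finset (Fin (3 * m))}
  {M : Fin (3 * m) ⊕ Fin (3 * m - 1) → Option (Fin n ⊕ Unit)}

namespace I13

theorem card_applicants : Fintype.card (Fin (3 * m) ⊕ Fin (3 * m - 1)) = 6 * m - 1 := by
  simp only [Fintype.card_sum, Fintype.card_fin]
  omega

theorem rk_inl_lt_three (hx3 : ∀ x : Fin (3 * m), (univ.filter fun i => x ∈ T i).card = 3)
    {x : Fin (3 * m)} {i : Fin n} (hxi : x ∈ T i) : (I13 T).rk (inl x) (inl i) < 3 := by
  have hsub : (univ.filter fun i' => i' < i ∧ x ∈ T i') ⊂ univ.filter fun i' => x ∈ T i' :=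
    (ssubset_iff_of_subset fun j hj => by simp_all).2 ⟨i, by simpa using hxi, by simp⟩
  exact (card_lt_card hsub).trans_eq (hx3 x)

theorem prefers_set (hx3 : ∀ x : Fin (3 * m), (univ.filter fun i => x ∈ T i).card = 3)
    {x : Fin (3 * m)} {i : Fin n} (hxi : x ∈ T i) :
    (I13 T).Prefers (inl x) (some (inl i)) (some (inr ())) :=
  ⟨hxi, trivial, rk_inl_lt_three hx3 hxi⟩

theorem prefers_M13_iff (hx3 : ∀ x : Fin (3 * m), (univ.filter fun i => x ∈ T i).card = 3)
    (hM : (I13 T).IsMatching M) (a : Fin (3 * m) ⊕ Fin (3 * m - 1)) :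
    (I13 T).Prefers a (M a) (M13 T a) ↔ ∃ x i, a = inl x ∧ M a = some (inl i) := by
  constructor
  · intro h
    rcases a with x | d <;> rcases hMa : M _ with _ | i | ⟨⟩ <;> rw [hMa] at h
    · exact h.elim
    · exact ⟨x, i, rfl, rfl⟩
    · exact absurd h ((I13 T).prefers_irrefl _ _)
    · exact h.elim
    · exact absurd h.2.2 (Nat.not_lt_zero _)
    · exact absurd h ((I13 T).prefers_irrefl _ _)
  · rintro ⟨x, i, rfl, hMx⟩
    rw [hMx]
    exact prefers_set hx3 (hM.1 _ _ hMx)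

theorem prefers_total (hx3 : ∀ x : Fin (3 * m), (univ.filter fun i => x ∈ T i).card = 3)
    (hM : (I13 T).IsMatching M) (hclosed : ¬ OpenProj M (inr ()))
    (a : Fin (3 * m) ⊕ Fin (3 * m - 1)) :
    (I13 T).Prefers a (M a) (M13 T a) ∨ (I13 T).Prefers a (M13 T a) (M a) := by
  rcases hMa : M a with _ | i | ⟨⟩
  · right
    rcases a with x | d <;> trivial
  · left
    rcases a with x | d
    · exact prefers_set hx3 (hM.1 _ _ hMa)
    · exact (hM.1 _ _ hMa).elim
  · exact (hclosed ⟨a, hMa⟩).elim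

theorem assigned_inl_of_open (hT3 : ∀ i, (T i).card = 3) (hM : (I13 T).IsMatching M)
    {j : Fin n} (hj : OpenProj M (inl j)) :
    assigned M (inl j) = (T j).map Function.Embedding.inl := by
  refine eq_of_subset_of_card_le (fun a ha => ?_) ?_
  · have hacc := hM.1 a _ (mem_assigned_s13.1 ha)
    rcases a with x | d
    · exact mem_map_of_mem _ hacc
    · exact hacc.elim
  · rw [card_map, hT3]
    exact hM.lq_le_card_assigned hj

end I13

theorem M13_isMatching : (I13 T).IsMatching (M13 T) := by
  refine ⟨fun a p hp => ?_, fun p => ?_⟩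
  · cases Option.some_injective _ hp
    rcases a with x | d <;> trivial
  · rcases p with i | ⟨⟩
    · left
      simp [assigned, M13]
    · right
      have huniv : assigned (M13 T) (inr ()) = univ := by
        ext a
        simp [assigned, M13]
      rw [huniv, card_univ, I13.card_applicants]
      exact ⟨le_rfl, le_rfl⟩

theorem opensCount_M13 (hm : 0 < m) : opensCount (M13 T) = 1 :=
  opensCount_eq_one_iff.2
    ⟨inr (), ⟨inl ⟨0, by omega⟩, rfl⟩, fun q ⟨_, hq⟩ => (Option.some_injective _ hq).symm⟩

theorem eq_M13_of_open (hM : (I13 T).IsMatching M) (hopen : OpenProj M (inr ())) : M = M13 T :=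
  funext (hM.eq_some_of_card_le_lq hopen I13.card_applicants.le)

def coverMatching (f : Fin (3 * m) → Fin n) :
    Fin (3 * m) ⊕ Fin (3 * m - 1) → Option (Fin n ⊕ Unit) :=
  Sum.elim (fun x => some (inl (f x))) fun _ => none

theorem coverMatching_isMatching (hT3 : ∀ i, (T i).card = 3) {f : Fin (3 * m) → Fin n}
    (hf : ∀ x y, y ∈ T (f x) ↔ f y = f x) : (I13 T).IsMatching (coverMatching f) := by
  refine ⟨fun a p hp => ?_, fun p => ?_⟩
  · rcases a with x | d
    · cases Option.some_injective _ hp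
      exact (hf x x).2 rfl
    · cases hp
  · rcases p with i | ⟨⟩
    · by_cases hi : ∃ x, f x = i
      · obtain ⟨x, rfl⟩ := hi
        have hassigned : assigned (coverMatching f) (inl (f x)) = (T (f x)).map .inl := by
          ext a
          rcases a with y | d
          · simp [coverMatching, hf x y]
          · simp [coverMatching]
        right
        rw [hassigned, card_map, hT3]
        exact ⟨le_rfl, le_rfl⟩
      · left
        rw [card_eq_zero, eq_empty_iff_forall_notMem]
        rintro (x | d) hx
        · exact hi ⟨x, by simpa [coverMatching] using hx⟩
        · simp [coverMatching] at hx
    · left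
      rw [card_eq_zero, eq_empty_iff_forall_notMem]
      rintro (x | d) <;> simp [coverMatching]

theorem coverMatching_morePopular (hm : 0 < m)
    (hx3 : ∀ x : Fin (3 * m), (univ.filter fun i => x ∈ T i).card = 3)
    {f : Fin (3 * m) → Fin n} (hM : (I13 T).IsMatching (coverMatching f)) :
    (I13 T).MorePopular (coverMatching f) (M13 T) := by
  refine morePopular_of_card_lt_two_mul ?_
  have hsub : univ.map .inl ⊆ univ.filter fun a =>
      (I13 T).Prefers a (coverMatching f a) (M13 T a) := by
    intro a ha
    obtain ⟨x, -, rfl⟩ := mem_map.1 ha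
    exact mem_filter.2 ⟨mem_univ _, (I13.prefers_M13_iff hx3 hM _).2 ⟨x, f x, rfl, rfl⟩⟩
  have := card_le_card hsub
  rw [card_map, card_univ, Fintype.card_fin] at this
  rw [I13.card_applicants]
  omega

theorem exactCover_of_forall_matched (hT3 : ∀ i, (T i).card = 3) (hM : (I13 T).IsMatching M)
    (h : ∀ x, ∃ i, M (inl x) = some (inl i)) : ExactCover T := by
  refine ⟨univ.filter fun i => OpenProj M (inl i), fun x => ?_⟩
  obtain ⟨i, hi⟩ := h x
  refine ⟨i, ⟨mem_filter.2 ⟨mem_univ _, _, hi⟩, hM.1 _ _ hi⟩, fun j ⟨hj, hxj⟩ => ?_⟩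
  have hmem : inl x ∈ assigned M (inl j) := by
    rw [I13.assigned_inl_of_open hT3 hM (mem_filter.1 hj).2]
    exact mem_map_of_mem _ hxj
  have hMx := mem_assigned_s13.1 hmem
  rw [hi] at hMx
  exact inl_injective (Option.some_injective _ hMx).symm

theorem exactCover_of_morePopular_M13 (hT3 : ∀ i, (T i).card = 3)
    (hx3 : ∀ x : Fin (3 * m), (univ.filter fun i => x ∈ T i).card = 3)
    (hM : (I13 T).IsMatching M) (hmp : (I13 T).MorePopular M (M13 T)) : ExactCover T := by
  have hclosed : ¬ OpenProj M (inr ()) := fun hopen => by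
    rw [eq_M13_of_open hM hopen] at hmp
    exact lt_irrefl _ hmp
  have hhalf := hmp.card_lt_two_mul (I13.prefers_total hx3 hM hclosed)
  have hsub : (univ.filter fun a => (I13 T).Prefers a (M a) (M13 T a)) ⊆ univ.map .inl := by
    intro a ha
    obtain ⟨x, -, rfl, -⟩ := (I13.prefers_M13_iff hx3 hM a).1 (mem_filter.1 ha).2
    exact mem_map_of_mem _ (mem_univ x)
  have hB := eq_of_subset_of_card_le hsub (by
    have := card_le_card hsub
    rw [card_map, card_univ, Fintype.card_fin] at this ⊢
    rw [I13.card_applicants] at hhalf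
    omega)
  refine exactCover_of_forall_matched hT3 hM fun x => ?_
  have hx : inl x ∈ univ.filter fun a => (I13 T).Prefers a (M a) (M13 T a) :=
    hB ▸ mem_map_of_mem _ (mem_univ x)
  obtain ⟨y, i, hyx, hi⟩ := (I13.prefers_M13_iff hx3 hM _).1 (mem_filter.1 hx).2
  exact ⟨i, inl_injective hyx ▸ hi⟩

theorem popular_M13_iff (hm : 0 < m) (hT3 : ∀ i, (T i).card = 3)
    (hx3 : ∀ x : Fin (3 * m), (univ.filter fun i => x ∈ T i).card = 3) :
    (I13 T).Popular (M13 T) ↔ ¬ ExactCover T := by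
  refine ⟨fun hpop hEC => ?_, fun hEC => ⟨M13_isMatching, fun M hM hmp => hEC ?_⟩⟩
  · obtain ⟨f, hf⟩ := hEC.exists_block
    have hM := coverMatching_isMatching hT3 hf
    exact hpop.2 _ hM (coverMatching_morePopular hm hx3 hM)
  · exact exactCover_of_morePopular_M13 hT3 hx3 hM hmp

theorem not_popular_of_forall_open_eq_inl (hT3 : ∀ i, (T i).card = 3)
    (hdisj : ∀ i, ∃ j, T i ∩ T j = ∅) {i : Fin n} (honly : ∀ q, OpenProj M q → q = inl i) :
    ¬ (I13 T).Popular M := by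
  intro hpop
  obtain ⟨j, hij⟩ := hdisj i
  have hji : j ≠ i := by
    rintro rfl
    have h := hT3 j
    rw [← inter_self (T j), hij, card_empty] at h
    exact absurd h (by norm_num)
  refine hpop.1.not_paretoOptimal_of_unmatched (q := inl j) (S := (T j).map .inl)
    (fun hj => hji (inl_injective (honly _ hj))) ?_ ?_ ?_ (by rw [card_map, hT3]; exact le_rfl)
    (by rw [card_map, hT3]; exact le_rfl) hpop.paretoOptimal
  · rw [map_nonempty, ← card_pos, hT3]
    norm_num
  · intro a ha
    obtain ⟨x, hxj, rfl⟩ := mem_map.1 ha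
    rcases hMx : M (inl x) with _ | p
    · exact hMx
    · cases honly p ⟨_, hMx⟩
      have hxi : x ∈ T i := hpop.1.1 _ _ hMx
      simpa [hij] using mem_inter.2 ⟨hxi, hxj⟩
  · intro a ha
    obtain ⟨x, hxj, rfl⟩ := mem_map.1 ha
    exact hxj

end Reduction

/-- Theorem: (i) the all-to-`p⁻` matching is popular iff the X3C instance has no
exact cover, and (ii) the constructed instance has a popular matching opening exactly
one project iff the X3C instance has no exact cover. -/
theorem stmt_13 (m n : ℕ) (hm : 0 < m) (T : Fin n → Finset (Fin (3 * m)))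
    (hT3 : ∀ i, (T i).card = 3)
    (hx3 : ∀ x : Fin (3 * m), (Finset.univ.filter fun i => x ∈ T i).card = 3)
    (hdisj : ∀ i, ∃ j, T i ∩ T j = ∅) :
    ((I13 T).Popular (M13 T) ↔ ¬ ExactCover T) ∧
    ((∃ M, (I13 T).Popular M ∧ HA.opensCount M = 1) ↔ ¬ ExactCover T) := by
  have hM13 := popular_M13_iff hm hT3 hx3
  refine ⟨hM13, ⟨?_, fun hEC => ⟨M13 T, hM13.2 hEC, opensCount_M13 hm⟩⟩⟩
  rintro ⟨M, hpop, hone⟩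
  obtain ⟨p, hp, honly⟩ := HA.opensCount_eq_one_iff.1 hone
  rcases p with i | ⟨⟩
  · exact (not_popular_of_forall_open_eq_inl hT3 hdisj honly hpop).elim
  · exact hM13.1 (eq_M13_of_open hpop.1 hp ▸ hpop)
end

section
/- Let a house allocation instance have applicant set A partitioned into types A_1, …, A_t, where two applicants are of the same type exactly when they have identical preference lists; let N_i denote the set of projects acceptable to type i, and let ≻_i be the common preference order of type i (with i denoting being unmatched). Define vote_i(p′, p) = 1 if p′ ≻_i p, 0 if p′ = p, and −1 if p ≻_i p′. Let M be a matching. Then there exists a matching more popular than M if and only if there exist nonnegative integers x_i^{p→p′} for all i ∈ [t] and p, p′ ∈ N_i ∪ {i}, and values o′_{p′} ∈ {0,1} for all p′ ∈ P, satisfying: (1) ∑_{p,p′∈N_i∪{i}} x_i^{p→p′} = |A_i| for each i ∈ [t]; (2) ∑_{p′∈N_i∪{i}} x_i^{p→p′} equals the number of type-i applicants assigned to p by M, for each i ∈ [t] and p ∈ N_i ∪ {i}; (3) ℓ_{p′} · o′_{p′} ≤ ∑_{i∈[t], p∈N_i∪{i}} x_i^{p→p′} ≤ u_{p′} · o′_{p′}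 for each p′ ∈ P; and (4) ∑_{i∈[t], p,p′∈N_i∪{i}} vote_i(p′, p) · x_i^{p→p′} ≥ 1. -/
open scoped Classical

/-- Type `i` strictly prefers assignment `o₁` to `o₂` (`none` = unmatched), w.r.t. the
common acceptability `tacc i` and ranks `trk i` of the type. -/
def tPrefers {P : Type} {t : ℕ} (tacc : Fin t → P → Prop) (trk : Fin t → P → ℕ)
    (i : Fin t) : Option P → Option P → Prop
  | some p, some q => tacc i p ∧ tacc i q ∧ trk i p < trk i q
  | some p, none => tacc i p
  | none, _ => False

/-- `okOpt tacc i o` : the assignment `o` belongs to `N_i ∪ {i}`, i.e. it is either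
being unmatched or an acceptable project of type `i`. -/
def okOpt {P : Type} {t : ℕ} (tacc : Fin t → P → Prop) (i : Fin t) : Option P → Prop
  | some p => tacc i p
  | none => True

/-- `vote_i(p', p)`: `1` if type `i` prefers `p'` to `p`, `−1` if it prefers `p` to
`p'`, and `0` otherwise (in particular if `p' = p`). -/
noncomputable def voteI {P : Type} {t : ℕ} (tacc : Fin t → P → Prop)
    (trk : Fin t → P → ℕ) (i : Fin t) (p' p : Option P) : ℤ :=
  if tPrefers tacc trk i p' p then 1 else if tPrefers tacc trk i p p' then -1 else 0


section Helpers

lemma splitCount {α β : Type*} [Nonempty β] [DecidableEq β] (s : Finset α) (T : Finset β)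
    (c : β → ℕ) (h : ∑ b ∈ T, c b = s.card) :
    ∃ f : α → β, (∀ a ∈ s, f a ∈ T) ∧ ∀ b ∈ T, (s.filter fun a => f a = b).card = c b := by
  classical
  induction T using Finset.induction generalizing s with
  | empty =>
    refine ⟨fun _ => Classical.arbitrary β, ?_, by simp⟩
    simp only [Finset.sum_empty] at h
    have : s = ∅ := Finset.card_eq_zero.mp h.symm
    simp [this]
  | @insert b T hb IH =>
    rw [Finset.sum_insert hb] at h
    have hle : c b ≤ s.card := by omega
    obtain ⟨s₁, hs₁s, hs₁c⟩ := Finset.exists_subset_card_eq hle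
    have hcard : ∑ b' ∈ T, c b' = (s \ s₁).card := by
      rw [Finset.card_sdiff_of_subset hs₁s]; omega
    obtain ⟨f, hf1, hf2⟩ := IH (s \ s₁) hcard
    refine ⟨fun a => if a ∈ s₁ then b else f a, ?_, ?_⟩
    · intro a ha
      by_cases h1 : a ∈ s₁
      · simp [h1]
      · simp only [h1, if_false]
        exact Finset.mem_insert_of_mem (hf1 a (Finset.mem_sdiff.mpr ⟨ha, h1⟩))
    · intro b' hb'
      rcases Finset.mem_insert.mp hb' with rfl | hb'T
      · have : s.filter (fun a => (if a ∈ s₁ then b' else f a) = b') = s₁ := by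
          ext a
          simp only [Finset.mem_filter]
          constructor
          · rintro ⟨has, heq⟩
            by_contra h1
            rw [if_neg h1] at heq
            exact hb (heq ▸ hf1 a (Finset.mem_sdiff.mpr ⟨has, h1⟩))
          · intro h1
            exact ⟨hs₁s h1, if_pos h1⟩
        rw [this, hs₁c]
      · have hne : b ≠ b' := fun h => hb (h ▸ hb'T)
        have : s.filter (fun a => (if a ∈ s₁ then b else f a) = b')
            = (s \ s₁).filter (fun a => f a = b') := by
          ext a
          simp only [Finset.mem_filter, Finset.mem_sdiff]
          constructor
          · rintro ⟨has, heq⟩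
            by_cases h1 : a ∈ s₁
            · rw [if_pos h1] at heq; exact absurd heq hne
            · rw [if_neg h1] at heq; exact ⟨⟨has, h1⟩, heq⟩
          · rintro ⟨⟨has, h1⟩, heq⟩
            exact ⟨has, by rw [if_neg h1]; exact heq⟩
        rw [this, hf2 b' hb'T]

lemma card_filter_eq_sum {A γ : Type*} [Fintype A] [Fintype γ] [DecidableEq γ]
    (Q : A → Prop) [DecidablePred Q] (g : A → γ)
    [inst : ∀ c, DecidablePred fun a => Q a ∧ g a = c] :
    (Finset.univ.filter fun a => Q a).card
      = ∑ c : γ, (Finset.univ.filter fun a => Q a ∧ g a = c).card := by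
  classical
  rw [Finset.card_eq_sum_card_fiberwise (fun a _ => Finset.mem_univ (g a))]
  refine Finset.sum_congr rfl fun c _ => ?_
  congr 1
  ext a
  simp only [Finset.mem_filter]
  tauto

lemma sum_eq_sum_fibers {A P : Type*} [Fintype A] [Fintype P] {t : ℕ}
    (τ : A → Fin t) (M M' : A → Option P) (g : Fin t → Option P → Option P → ℤ)
    [inst : ∀ i p p', DecidablePred fun a => τ a = i ∧ M a = p ∧ M' a = p'] :
    ∑ a : A, g (τ a) (M a) (M' a) =
    ∑ i, ∑ p, ∑ p', g i p p'
      * ((Finset.univ.filter fun a => τ a = i ∧ M a = p ∧ M' a = p').card : ℤ) := by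
  classical
  rw [← Finset.sum_fiberwise_of_maps_to (g := fun a => (τ a, M a, M' a))
    (fun a _ => Finset.mem_univ _) (fun a => g (τ a) (M a) (M' a))]
  rw [Fintype.sum_prod_type]
  refine Finset.sum_congr rfl fun i _ => ?_
  rw [Fintype.sum_prod_type]
  refine Finset.sum_congr rfl fun p _ => Finset.sum_congr rfl fun p' _ => ?_
  have hset : (Finset.univ.filter fun a => (fun a => (τ a, M a, M' a)) a = (i, p, p'))
      = Finset.univ.filter fun a => τ a = i ∧ M a = p ∧ M' a = p' := by
    ext a; simp [Prod.ext_iff]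
  rw [hset]
  rw [Finset.sum_congr rfl (fun a ha => show g (τ a) (M a) (M' a) = g i p p' from by
    simp only [Finset.mem_filter] at ha
    rw [ha.2.1, ha.2.2.1, ha.2.2.2])]
  rw [Finset.sum_const, nsmul_eq_mul, mul_comm]

lemma tPrefers_asymm {P : Type} {t : ℕ} (tacc : Fin t → P → Prop) (trk : Fin t → P → ℕ)
    (i : Fin t) (p q : Option P) (h : tPrefers tacc trk i p q) :
    ¬ tPrefers tacc trk i q p := by
  cases p <;> cases q <;> simp_all [tPrefers] <;> omega

lemma voteI_eq {P : Type} {t : ℕ} (tacc : Fin t → P → Prop) (trk : Fin t → P → ℕ)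
    (i : Fin t) (p' p : Option P) [Decidable (tPrefers tacc trk i p' p)]
    [Decidable (tPrefers tacc trk i p p')] :
    voteI tacc trk i p' p = (if tPrefers tacc trk i p' p then (1 : ℤ) else 0)
      - (if tPrefers tacc trk i p p' then (1 : ℤ) else 0) := by
  unfold voteI
  by_cases h1 : tPrefers tacc trk i p' p
  · simp [h1, tPrefers_asymm _ _ _ _ _ h1]
  · by_cases h2 : tPrefers tacc trk i p p' <;> simp [h1, h2]

lemma vote_sum {A P : Type} [Fintype A] {t : ℕ} (tacc : Fin t → P → Prop)
    (trk : Fin t → P → ℕ) (τ : A → Fin t) (M M' : A → Option P)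
    [inst1 : DecidablePred fun a => tPrefers tacc trk (τ a) (M' a) (M a)]
    [inst2 : DecidablePred fun a => tPrefers tacc trk (τ a) (M a) (M' a)] :
    ∑ a : A, voteI tacc trk (τ a) (M' a) (M a)
      = ((Finset.univ.filter fun a => tPrefers tacc trk (τ a) (M' a) (M a)).card : ℤ)
      - ((Finset.univ.filter fun a => tPrefers tacc trk (τ a) (M a) (M' a)).card : ℤ) := by
  rw [Finset.sum_congr rfl fun a _ => voteI_eq tacc trk (τ a) (M' a) (M a)]
  rw [Finset.sum_sub_distrib, Finset.sum_boole, Finset.sum_boole]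

end Helpers

/-- Theorem: the ILP of the FPT algorithm for `pop-ha` parameterized by the number of
projects.  Partition the applicants into types `A_1, …, A_t` by identical preference
lists.  Given a matching `M`, there is a matching more popular than `M` iff there are
nonnegative integers `x_i^{p → p'}` (for `i ∈ [t]`, `p, p' ∈ N_i ∪ {i}`) and values
`o'_{p'} ∈ {0, 1}` satisfying the constraints (6)–(10): every applicant is reassigned,
the reassignment is consistent with `M`, quotas are respected (`0` for closed
projects), and the total vote in favor of the reassignment is at least `1`. -/
theorem stmt_18 {A P : Type} [Fintype A] [Fintype P] (I : HA A P)
    (t : ℕ) (τ : A → Fin t)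
    (tacc : Fin t → P → Prop) (trk : Fin t → P → ℕ)
    (hrep : ∀ a, (∀ p, I.acc a p ↔ tacc (τ a) p) ∧ ∀ p, I.rk a p = trk (τ a) p)
    (hdistinct : ∀ i j : Fin t, (∀ p, tacc i p ↔ tacc j p) →
      (∀ p, trk i p = trk j p) → i = j)
    (hstrict : ∀ i p q, tacc i p → tacc i q → trk i p = trk i q → p = q)
    (M : A → Option P) (hM : I.IsMatching M) :
    (∃ M', I.IsMatching M' ∧ I.MorePopular M' M) ↔
    ∃ (x : Fin t → Option P → Option P → ℕ) (o : P → ℕ),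
      (∀ p, o p ≤ 1) ∧
      (∀ i p p', x i p p' ≠ 0 → okOpt tacc i p ∧ okOpt tacc i p') ∧
      (∀ i : Fin t, (∑ p : Option P, ∑ p' : Option P, x i p p') =
        (Finset.univ.filter fun a => τ a = i).card) ∧
      (∀ i : Fin t, ∀ p : Option P, okOpt tacc i p →
        (∑ p' : Option P, x i p p') =
          (Finset.univ.filter fun a => τ a = i ∧ M a = p).card) ∧
      (∀ p' : P,
        (∑ i : Fin t, ∑ p : Option P, x i p (some p')) ≤ I.uq p' * o p' ∧
        I.lq p' * o p' ≤ ∑ i : Fin t, ∑ p : Option P, x i p (some p')) ∧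
      1 ≤ ∑ i : Fin t, ∑ p : Option P, ∑ p' : Option P,
        voteI tacc trk i p' p * (x i p p' : ℤ) := by
  classical
  have hpref : ∀ (a : A) (o₁ o₂ : Option P),
      I.Prefers a o₁ o₂ ↔ tPrefers tacc trk (τ a) o₁ o₂ := by
    intro a o₁ o₂
    cases o₁ <;> cases o₂ <;> simp [HA.Prefers, tPrefers, (hrep a).1, (hrep a).2]
  have hfilter : ∀ N N' : A → Option P,
      (Finset.univ.filter fun a => I.Prefers a (N a) (N' a))
        = Finset.univ.filter fun a => tPrefers tacc trk (τ a) (N a) (N' a) :=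
    fun N N' => Finset.filter_congr fun a _ => by rw [hpref]
  have hok : ∀ (N : A → Option P), I.IsMatching N → ∀ a, okOpt tacc (τ a) (N a) := by
    intro N hN a
    cases hNa : N a with
    | none => trivial
    | some q => exact ((hrep a).1 q).mp (hN.1 a q hNa)
  -- the number of applicants assigned to `p'` decomposes into fibers
  have hass : ∀ (M' : A → Option P) (p' : P),
      (HA.assigned M' p').card = ∑ i : Fin t, ∑ p : Option P,
        (Finset.univ.filter fun a => τ a = i ∧ M a = p ∧ M' a = some p').card := by
    intro M' p'
    have e1 : (HA.assigned M' p').card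
        = ∑ i : Fin t, (Finset.univ.filter fun a => M' a = some p' ∧ τ a = i).card :=
      card_filter_eq_sum (fun a => M' a = some p') τ
    rw [e1]
    refine Finset.sum_congr rfl fun i _ => ?_
    have e2 : (Finset.univ.filter fun a => M' a = some p' ∧ τ a = i).card
        = ∑ p : Option P,
          (Finset.univ.filter fun a => (M' a = some p' ∧ τ a = i) ∧ M a = p).card :=
      card_filter_eq_sum (fun a => M' a = some p' ∧ τ a = i) M
    rw [e2]
    refine Finset.sum_congr rfl fun p _ => ?_
    congr 1
    exact Finset.filter_congr fun a _ => by tauto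
  constructor
  · rintro ⟨M', hM', hpop⟩
    refine ⟨fun i p p' => (Finset.univ.filter fun a => τ a = i ∧ M a = p ∧ M' a = p').card,
      fun p' => if HA.OpenProj M' p' then 1 else 0, ?_, ?_, ?_, ?_, ?_, ?_⟩
    · intro p
      beta_reduce
      split_ifs <;> simp
    · intro i p p' hx
      beta_reduce at hx
      obtain ⟨a, ha⟩ := Finset.card_ne_zero.mp hx
      obtain ⟨hi, hp, hp'⟩ := (Finset.mem_filter.mp ha).2
      subst hi; subst hp; subst hp'
      exact ⟨hok M hM a, hok M' hM' a⟩
    · intro i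
      beta_reduce
      have e1 : (Finset.univ.filter fun a => τ a = i).card
          = ∑ p : Option P, (Finset.univ.filter fun a => τ a = i ∧ M a = p).card :=
        card_filter_eq_sum (fun a => τ a = i) M
      rw [e1]
      refine Finset.sum_congr rfl fun p _ => ?_
      have e2 : (Finset.univ.filter fun a => τ a = i ∧ M a = p).card
          = ∑ p' : Option P,
            (Finset.univ.filter fun a => (τ a = i ∧ M a = p) ∧ M' a = p').card :=
        card_filter_eq_sum (fun a => τ a = i ∧ M a = p) M'
      rw [e2]
      refine Finset.sum_congr rfl fun p' _ => ?_
      congr 1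
      exact Finset.filter_congr fun a _ => by tauto
    · intro i p _
      beta_reduce
      have e2 : (Finset.univ.filter fun a => τ a = i ∧ M a = p).card
          = ∑ p' : Option P,
            (Finset.univ.filter fun a => (τ a = i ∧ M a = p) ∧ M' a = p').card :=
        card_filter_eq_sum (fun a => τ a = i ∧ M a = p) M'
      rw [e2]
      refine Finset.sum_congr rfl fun p' _ => ?_
      congr 1
      exact Finset.filter_congr fun a _ => by tauto
    · intro p'
      beta_reduce
      rw [← hass M' p']
      by_cases hopen : HA.OpenProj M' p'
      · rw [if_pos hopen, mul_one, mul_one]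
        obtain ⟨a, ha⟩ := hopen
        have hne : (HA.assigned M' p').card ≠ 0 :=
          Finset.card_ne_zero_of_mem (Finset.mem_filter.mpr ⟨Finset.mem_univ a, ha⟩)
        rcases hM'.2 p' with h0 | ⟨h1, h2⟩
        · exact absurd h0 hne
        · exact ⟨h2, h1⟩
      · rw [if_neg hopen, mul_zero, mul_zero]
        have hz : (HA.assigned M' p').card = 0 := by
          rw [Finset.card_eq_zero]
          refine Finset.filter_eq_empty_iff.mpr fun a _ hc => hopen ⟨a, hc⟩
        omega
    · beta_reduce
      have h1 := sum_eq_sum_fibers τ M M' (fun i p p' => voteI tacc trk i p' p)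
      have h2 := vote_sum tacc trk τ M M'
      have hlt := hpop
      unfold HA.MorePopular at hlt
      rw [hfilter M M', hfilter M' M] at hlt
      have key : (1 : ℤ) ≤ ∑ i, ∑ p, ∑ p', voteI tacc trk i p' p
          * ((Finset.univ.filter fun a => τ a = i ∧ M a = p ∧ M' a = p').card : ℤ) := by
        rw [← h1, h2]; omega
      calc (1 : ℤ) ≤ _ := key
      _ = _ := Finset.sum_congr rfl fun i _ => Finset.sum_congr rfl fun p _ =>
          Finset.sum_congr rfl fun p' _ => rfl
  · rintro ⟨x, o, ho, hsupp, hsum1, hsum2, hquota, hvote⟩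
    have hScard : ∀ i p, ∑ b : Option P, x i p b
        = (Finset.univ.filter fun a => τ a = i ∧ M a = p).card := by
      intro i p
      by_cases hokp : okOpt tacc i p
      · exact hsum2 i p hokp
      · have hx0 : ∀ p', x i p p' = 0 := by
          intro p'
          by_contra h
          exact hokp (hsupp i p p' h).1
        have hS : (Finset.univ.filter fun a => τ a = i ∧ M a = p) = ∅ := by
          cases p with
          | none => exact absurd trivial hokp
          | some q =>
            refine Finset.filter_eq_empty_iff.mpr fun a _ hc => ?_
            obtain ⟨hi, hMa⟩ := hc
            subst hi
            exact hokp (((hrep a).1 q).mp (hM.1 a q hMa))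
        simp [hx0, hS]
    have hex : ∀ (i : Fin t) (p : Option P), ∃ f : A → Option P,
        (∀ a ∈ Finset.univ.filter fun a => τ a = i ∧ M a = p, f a ∈ Finset.univ) ∧
        ∀ b ∈ (Finset.univ : Finset (Option P)),
          ((Finset.univ.filter fun a => τ a = i ∧ M a = p).filter fun a => f a = b).card
            = x i p b :=
      fun i p => splitCount _ Finset.univ (x i p) (hScard i p)
    choose f hf using hex
    have hcard : ∀ i p p',
        (Finset.univ.filter fun a => τ a = i ∧ M a = p ∧ f (τ a) (M a) a = p').card
          = x i p p' := by
      intro i p p'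
      have hst : (Finset.univ.filter fun a => τ a = i ∧ M a = p ∧ f (τ a) (M a) a = p')
          = (Finset.univ.filter fun a => τ a = i ∧ M a = p).filter fun a => f i p a = p' := by
        ext a
        simp only [Finset.mem_filter, Finset.mem_univ, true_and, and_assoc]
        constructor
        · rintro ⟨rfl, rfl, hq⟩; exact ⟨rfl, rfl, hq⟩
        · rintro ⟨rfl, rfl, hq⟩; exact ⟨rfl, rfl, hq⟩
      rw [hst, (hf i p).2 p' (Finset.mem_univ _)]
    set M' : A → Option P := fun a => f (τ a) (M a) a with hM'def
    have hcard' : ∀ i p p',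
        (Finset.univ.filter fun a => τ a = i ∧ M a = p ∧ M' a = p').card = x i p p' :=
      hcard
    have hMatch : I.IsMatching M' := by
      constructor
      · intro a q hq
        have hmem : a ∈ Finset.univ.filter
            fun b => τ b = τ a ∧ M b = M a ∧ M' b = some q :=
          Finset.mem_filter.mpr ⟨Finset.mem_univ a, rfl, rfl, hq⟩
        have hne : x (τ a) (M a) (some q) ≠ 0 := by
          rw [← hcard' (τ a) (M a) (some q)]
          exact Finset.card_ne_zero_of_mem hmem
        exact ((hrep a).1 q).mpr (hsupp (τ a) (M a) (some q) hne).2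
      · intro p'
        have hc : (HA.assigned M' p').card
            = ∑ i : Fin t, ∑ p : Option P, x i p (some p') := by
          rw [hass M' p']
          exact Finset.sum_congr rfl fun i _ => Finset.sum_congr rfl fun p _ => hcard' i p _
        obtain ⟨h1, h2⟩ := hquota p'
        rcases Nat.le_one_iff_eq_zero_or_eq_one.mp (ho p') with h | h
        · left; rw [h, mul_zero] at h1; omega
        · right; rw [h, mul_one] at h1 h2; omega
    refine ⟨M', hMatch, ?_⟩
    have hv : (1 : ℤ) ≤ ∑ a : A, voteI tacc trk (τ a) (M' a) (M a) := by
      rw [sum_eq_sum_fibers τ M M' (fun i p p' => voteI tacc trk i p' p)]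
      calc (1 : ℤ) ≤ _ := hvote
      _ = _ := Finset.sum_congr rfl fun i _ => Finset.sum_congr rfl fun p _ =>
          Finset.sum_congr rfl fun p' _ => by rw [hcard' i p p']
    rw [vote_sum tacc trk τ M M'] at hv
    unfold HA.MorePopular
    rw [hfilter M M', hfilter M' M]
    omega
end
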